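/- arXiv:1006.5004 — 8 statements merged into one kernel-verified Lean document; each statement's English description precedes it below -/
import Mathlib

section
/- Let k be a field and n ≥ 1. For every invertible matrix A ∈ GL_n(k) there exists a permutation σ ∈ S_n and invertible upper triangular matrices b₁, b₂ ∈ GL_n(k) such that A = b₁ · P_σ · b₂, where P_σ is the permutation matrix of σ. (Existence part of the Bruhat decomposition GL_n(k) = ⋃_{σ∈S_n} B P_σ B.) -/
/-- A square matrix is upper triangular if all entries below the diagonal vanish. -/
def IsUpperTriangular {k : Type*} [Field k] {n : ℕ} (A : Matrix (Fin n) (Fin n) k) : Prop :=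
  ∀ i j : Fin n, j < i → A i j = 0

/-- The permutation matrix of `σ`, with `(P_σ)_{i,j} = 1` if `i = σ j` and `0` otherwise. -/
def permMat {k : Type*} [Field k] {n : ℕ} (σ : Equiv.Perm (Fin n)) :
    Matrix (Fin n) (Fin n) k :=
  Matrix.of fun i j => if i = σ j then 1 else 0

/-!
Induction on `n`. Let `c` be the first nonzero entry in the last row of an invertible `M`.
Right multiplication by an upper triangular matrix (adding multiples of column `c` to the later
columns) turns the last row into `e_c`; left multiplication by one (adding multiples of the last
row to the others) then clears the rest of column `c`. What remains is `insertPivot ⊤ c C`, a pivot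
`1` at `(⊤, c)` bordering an invertible `C` of size one less. Since
`insertPivot r m X * insertPivot m c Y = insertPivot r c (X * Y)` and `insertPivot r r` preserves
upper triangularity, a decomposition `C = b₁ P_σ b₂` lifts to one of `M`.
-/

def insertPivotPerm {n : ℕ} (r c : Fin (n + 1)) (σ : Equiv.Perm (Fin n)) :
    Equiv.Perm (Fin (n + 1)) :=
  (finSuccEquiv' c).trans ((Equiv.optionCongr σ).trans (finSuccEquiv' r).symm)

section InsertPivotPerm

variable {n : ℕ} (r c : Fin (n + 1)) (σ : Equiv.Perm (Fin n))

@[simp]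
theorem insertPivotPerm_apply_same : insertPivotPerm r c σ c = r := by
  simp [insertPivotPerm]

@[simp]
theorem insertPivotPerm_apply_succAbove (j : Fin n) :
    insertPivotPerm r c σ (c.succAbove j) = r.succAbove (σ j) := by
  simp [insertPivotPerm]

end InsertPivotPerm

namespace Matrix

section InsertPivot

variable {R : Type*} {n : ℕ}

def insertPivot [Zero R] [One R] (r c : Fin (n + 1)) (C : Matrix (Fin n) (Fin n) R) :
    Matrix (Fin (n + 1)) (Fin (n + 1)) R :=
  of <| Fin.insertNth r (Pi.single c 1) fun i => Fin.insertNth c 0 (C i)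

section Entries

variable [Zero R] [One R] (r c : Fin (n + 1)) (C : Matrix (Fin n) (Fin n) R)

@[simp]
theorem insertPivot_apply_same_same : insertPivot r c C r c = 1 := by
  simp [insertPivot]

@[simp]
theorem insertPivot_apply_same_succAbove (j : Fin n) :
    insertPivot r c C r (c.succAbove j) = 0 := by
  simp [insertPivot]

@[simp]
theorem insertPivot_succAbove_apply_same (i : Fin n) :
    insertPivot r c C (r.succAbove i) c = 0 := by
  simp [insertPivot]

@[simp]
theorem insertPivot_succAbove_apply_succAbove (i j : Fin n) :
    insertPivot r c C (r.succAbove i) (c.succAbove j) = C i j := by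
  simp [insertPivot]

end Entries

theorem insertPivot_mul_insertPivot [NonAssocSemiring R] (r m c : Fin (n + 1))
    (X Y : Matrix (Fin n) (Fin n) R) :
    insertPivot r m X * insertPivot m c Y = insertPivot r c (X * Y) := by
  ext a b
  induction a using Fin.succAboveCases r <;> induction b using Fin.succAboveCases c <;>
    simp [mul_apply, Fin.sum_univ_succAbove _ m]

theorem det_insertPivot [CommRing R] (r c : Fin (n + 1)) (C : Matrix (Fin n) (Fin n) R) :
    (insertPivot r c C).det = (-1) ^ (r + c : ℕ) * C.det := by
  rw [det_succ_row _ r, Finset.sum_eq_single c (fun b _ hb => ?_) (by simp)]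
  · congr 2
    · simp
    · ext i j; simp
  · obtain ⟨j, rfl⟩ := Fin.exists_succAbove_eq hb
    simp

theorem isUnit_insertPivot_iff [CommRing R] {r c : Fin (n + 1)} {C : Matrix (Fin n) (Fin n) R} :
    IsUnit (insertPivot r c C) ↔ IsUnit C := by
  rw [isUnit_iff_isUnit_det, isUnit_iff_isUnit_det, det_insertPivot,
    (isUnit_neg_one.pow _).mul_left_iff]

theorem IsUpperTriangular.insertPivot [Zero R] [One R] (r : Fin (n + 1))
    {C : Matrix (Fin n) (Fin n) R} (hC : C.IsUpperTriangular) :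
    (insertPivot r r C).IsUpperTriangular := by
  intro a b hba
  induction a using Fin.succAboveCases r <;> induction b using Fin.succAboveCases r
  · exact absurd hba (lt_irrefl _)
  · simp
  · simp
  · simpa using hC (Fin.succAbove_lt_succAbove_iff.mp hba)

theorem eq_insertPivot_submatrix [Zero R] [One R] {r c : Fin (n + 1)}
    {N : Matrix (Fin (n + 1)) (Fin (n + 1)) R} (hr : N r = Pi.single c 1)
    (hc : ∀ i, N (r.succAbove i) c = 0) :
    N = insertPivot r c (N.submatrix r.succAbove c.succAbove) := by
  ext a b
  induction a using Fin.succAboveCases r <;> induction b using Fin.succAboveCases c <;>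
    simp [hr, hc]

end InsertPivot

section UpperTriangularUnits

variable {m K : Type*} [Fintype m] [LinearOrder m]

def upperTriangularUnits (m R : Type*) [Fintype m] [LinearOrder m] [Semiring R] :
    Submonoid (Matrix m m R) where
  carrier := {b | b.IsUpperTriangular ∧ IsUnit b}
  mul_mem' ha hb := ⟨ha.1.mul hb.1, ha.2.mul hb.2⟩
  one_mem' := ⟨blockTriangular_one, isUnit_one⟩

theorem insertPivot_mem_upperTriangularUnits {R : Type*} [CommRing R] {n : ℕ} (r : Fin (n + 1))
    {b : Matrix (Fin n) (Fin n) R} (hb : b ∈ upperTriangularUnits (Fin n) R) :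
    insertPivot r r b ∈ upperTriangularUnits (Fin (n + 1)) R :=
  ⟨hb.1.insertPivot r, isUnit_insertPivot_iff.mpr hb.2⟩

variable [Field K]

theorem IsUpperTriangular.isUnit {U : Matrix m m K} (hU : U.IsUpperTriangular)
    (hdiag : ∀ i, U i i ≠ 0) : IsUnit U := by
  rw [isUnit_iff_isUnit_det, det_of_isUpperTriangular hU]
  exact (Finset.prod_ne_zero_iff.mpr fun i _ => hdiag i).isUnit

theorem exists_mem_upperTriangularUnits_row_eq {v : m → K} (hv : v ≠ 0) :
    ∃ j, ∃ U ∈ upperTriangularUnits m K, U j = v := by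
  obtain ⟨j, hj, hmin⟩ := wellFounded_lt.has_min {i | v i ≠ 0} (Function.ne_iff.mp hv)
  have htri : (updateRow 1 j v).IsUpperTriangular := by
    intro a b (hba : b < a)
    rcases eq_or_ne a j with rfl | ha
    · simpa using not_not.mp fun hb => hmin b hb hba
    · rw [updateRow_ne ha, one_apply_ne hba.ne']
  refine ⟨j, updateRow 1 j v, ⟨htri, htri.isUnit fun i => ?_⟩, updateRow_self⟩
  rcases eq_or_ne i j with rfl | hi
  · simpa using hj
  · simp [hi]

theorem exists_row_eq_single_mul_mem_upperTriangularUnits {l : Type*} {M : Matrix l m K} {r : l}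
    (hr : M r ≠ 0) :
    ∃ j, ∃ M' : Matrix l m K, ∃ U ∈ upperTriangularUnits m K,
      M = M' * U ∧ M' r = Pi.single j 1 := by
  obtain ⟨j, U, hU, hUj⟩ := exists_mem_upperTriangularUnits_row_eq hr
  obtain ⟨M', rfl⟩ : ∃ M', M = M' * U :=
    ⟨M * U⁻¹, (nonsing_inv_mul_cancel_right _ _ ((isUnit_iff_isUnit_det U).mp hU.2)).symm⟩
  refine ⟨j, M', U, hU, rfl, vecMul_injective_iff_isUnit.mpr hU.2 ?_⟩
  change M' r ᵥ* U = Pi.single j 1 ᵥ* U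
  rw [← mul_apply_eq_vecMul, single_one_vecMul, row, hUj]

theorem exists_mem_upperTriangularUnits_mul_col_eq_single [OrderTop m] {l : Type*}
    {M : Matrix m l K} {c : l} (hc : M ⊤ c = 1) :
    ∃ L ∈ upperTriangularUnits m K, ∃ M' : Matrix m l K,
      M = L * M' ∧ M' ⊤ = M ⊤ ∧ M'.col c = Pi.single ⊤ 1 := by
  set L : Matrix m m K := updateCol 1 ⊤ (M.col c) with hL
  have hLtop : L ⊤ = Pi.single ⊤ 1 := by
    ext b
    rcases eq_or_ne b ⊤ with rfl | hb
    · simpa [L] using hc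
    · simp [L, hb, one_apply_ne hb.symm]
  have htri : L.IsUpperTriangular := fun a b (hba : b < a) => by
    rw [hL, updateCol_ne (hba.trans_le le_top).ne, one_apply_ne hba.ne']
  have hunit : IsUnit L := htri.isUnit fun i => by
    rcases eq_or_ne i ⊤ with rfl | hi
    · simp [L, hc]
    · simp [L, hi]
  obtain ⟨M', hM⟩ : ∃ M', M = L * M' :=
    ⟨L⁻¹ * M, (mul_nonsing_inv_cancel_left _ _ ((isUnit_iff_isUnit_det L).mp hunit)).symm⟩
  refine ⟨L, ⟨htri, hunit⟩, M', hM, ?_, mulVec_injective_iff_isUnit.mpr hunit ?_⟩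
  · rw [hM, mul_apply_eq_vecMul, hLtop, single_one_vecMul]
    rfl
  · change L *ᵥ M'.col c = L *ᵥ Pi.single ⊤ 1
    calc L *ᵥ M'.col c = M.col c := by rw [hM]; rfl
      _ = L *ᵥ Pi.single ⊤ 1 := by ext i; simp [L]

end UpperTriangularUnits

theorem insertPivot_permMat {k : Type*} [Field k] {n : ℕ} (r c : Fin (n + 1))
    (σ : Equiv.Perm (Fin n)) :
    insertPivot r c (permMat σ : Matrix (Fin n) (Fin n) k) = permMat (insertPivotPerm r c σ) := by
  ext a b
  induction a using Fin.succAboveCases r <;> induction b using Fin.succAboveCases c <;>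
    simp [permMat, Fin.succAbove_ne, (Fin.succAbove_ne _ _).symm]

theorem exists_eq_mul_insertPivot_mul {K : Type*} [Field K] {n : ℕ}
    {M : Matrix (Fin (n + 1)) (Fin (n + 1)) K} (hM : IsUnit M) :
    ∃ L ∈ upperTriangularUnits (Fin (n + 1)) K, ∃ U ∈ upperTriangularUnits (Fin (n + 1)) K,
      ∃ c C, M = L * insertPivot ⊤ c C * U := by
  have hrow : M ⊤ ≠ 0 := fun h =>
    ((isUnit_iff_isUnit_det M).mp hM).ne_zero (det_eq_zero_of_row_eq_zero ⊤ (congrFun h))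
  obtain ⟨c, M₁, U, hU, hMU, hM₁⟩ := exists_row_eq_single_mul_mem_upperTriangularUnits hrow
  obtain ⟨L, hL, N, hLN, hN, hNc⟩ :=
    exists_mem_upperTriangularUnits_mul_col_eq_single (M := M₁) (c := c) (by simp [hM₁])
  have hNc' (i : Fin n) : N ((⊤ : Fin (n + 1)).succAbove i) c = 0 := by
    simpa [Fin.succAbove_ne] using congrFun hNc (Fin.succAbove ⊤ i)
  refine ⟨L, hL, U, hU, c, N.submatrix (Fin.succAbove ⊤) c.succAbove, ?_⟩
  rw [← eq_insertPivot_submatrix (hN.trans hM₁) hNc', hMU, hLN]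

theorem exists_eq_mul_permMat_mul {K : Type*} [Field K] :
    ∀ {n : ℕ} {M : Matrix (Fin n) (Fin n) K}, IsUnit M →
      ∃ σ, ∃ b₁ ∈ upperTriangularUnits (Fin n) K, ∃ b₂ ∈ upperTriangularUnits (Fin n) K,
        M = b₁ * permMat σ * b₂
  | 0, M, _ => ⟨1, 1, one_mem _, 1, one_mem _, Subsingleton.elim _ _⟩
  | n + 1, M, hM => by
    obtain ⟨L, hL, U, hU, c, C, rfl⟩ := exists_eq_mul_insertPivot_mul hM
    have hC : IsUnit C := by
      rw [← isUnit_insertPivot_iff (r := ⊤) (c := c)]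
      exact isUnit_of_mul_isUnit_right (isUnit_of_mul_isUnit_left hM)
    obtain ⟨σ, b₁, hb₁, b₂, hb₂, rfl⟩ := exists_eq_mul_permMat_mul hC
    refine ⟨insertPivotPerm ⊤ c σ, L * insertPivot ⊤ ⊤ b₁,
      mul_mem hL (insertPivot_mem_upperTriangularUnits ⊤ hb₁), insertPivot c c b₂ * U,
      mul_mem (insertPivot_mem_upperTriangularUnits c hb₂) hU, ?_⟩
    rw [← insertPivot_mul_insertPivot ⊤ c c, ← insertPivot_mul_insertPivot ⊤ ⊤ c,
      insertPivot_permMat]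
    simp only [Matrix.mul_assoc]

end Matrix

theorem bruhat_decomposition_existence_general {k : Type*} [Field k] {n : ℕ}
    (A : GL (Fin n) k) :
    ∃ (σ : Equiv.Perm (Fin n)) (b₁ b₂ : GL (Fin n) k),
      IsUpperTriangular (b₁ : Matrix (Fin n) (Fin n) k) ∧
      IsUpperTriangular (b₂ : Matrix (Fin n) (Fin n) k) ∧
      (A : Matrix (Fin n) (Fin n) k) = (b₁ : Matrix (Fin n) (Fin n) k) * permMat σ * (b₂ : Matrix (Fin n) (Fin n) k) := by
  obtain ⟨σ, b₁, hb₁, b₂, hb₂, h⟩ := Matrix.exists_eq_mul_permMat_mul A.isUnit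
  exact ⟨σ, hb₁.2.unit, hb₂.2.unit, hb₁.1, hb₂.1, h⟩

/-- Existence part of the Bruhat decomposition of `GL_n(k)`: every invertible matrix
lies in a double coset `B P_σ B` of the group `B` of invertible upper triangular matrices. -/
theorem bruhat_decomposition_existence {k : Type*} [Field k] {n : ℕ} (hn : 1 ≤ n)
    (A : GL (Fin n) k) :
    ∃ (σ : Equiv.Perm (Fin n)) (b₁ b₂ : GL (Fin n) k),
      IsUpperTriangular (b₁ : Matrix (Fin n) (Fin n) k) ∧
      IsUpperTriangular (b₂ : Matrix (Fin n) (Fin n) k) ∧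
      (A : Matrix (Fin n) (Fin n) k) = (b₁ : Matrix (Fin n) (Fin n) k) * permMat σ * (b₂ : Matrix (Fin n) (Fin n) k) :=
  bruhat_decomposition_existence_general A
end

section
/- Let k be a field and n ≥ 1. If σ, τ ∈ S_n and there exist invertible upper triangular matrices b₁, b₂, b₃, b₄ ∈ GL_n(k) with b₁ · P_σ · b₂ = b₃ · P_τ · b₄, then σ = τ. (Uniqueness part of the Bruhat decomposition: the double cosets B P_σ B are pairwise disjoint.) -/
lemma perm_le_eq_one {n : ℕ} (π : Equiv.Perm (Fin n)) (hle : ∀ j, π j ≤ j) : π = 1 := by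
  have hsum : ∑ j : Fin n, ((π j : ℕ)) = ∑ j : Fin n, (j : ℕ) :=
    Equiv.sum_comp π (fun j => (j : ℕ))
  have key := (Finset.sum_eq_sum_iff_of_le
    (f := fun j : Fin n => ((π j : ℕ))) (g := fun j : Fin n => (j : ℕ))
    (fun i _ => hle i)).mp hsum
  ext j
  exact congrArg Fin.val (Fin.ext (key j (Finset.mem_univ j)))

/-- Uniqueness part of the Bruhat decomposition of `GL_n(k)`: the double cosets
`B P_σ B` of the group `B` of invertible upper triangular matrices are pairwise disjoint. -/
theorem bruhat_decomposition_uniqueness {k : Type*} [Field k] {n : ℕ} (hn : 1 ≤ n)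
    (σ τ : Equiv.Perm (Fin n)) (b₁ b₂ b₃ b₄ : GL (Fin n) k)
    (h₁ : IsUpperTriangular (b₁ : Matrix (Fin n) (Fin n) k))
    (h₂ : IsUpperTriangular (b₂ : Matrix (Fin n) (Fin n) k))
    (h₃ : IsUpperTriangular (b₃ : Matrix (Fin n) (Fin n) k))
    (h₄ : IsUpperTriangular (b₄ : Matrix (Fin n) (Fin n) k))
    (h : (b₁ : Matrix (Fin n) (Fin n) k) * permMat σ * (b₂ : Matrix (Fin n) (Fin n) k) =
         (b₃ : Matrix (Fin n) (Fin n) k) * permMat τ * (b₄ : Matrix (Fin n) (Fin n) k)) :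
    σ = τ := by
  have tri : ∀ A : Matrix (Fin n) (Fin n) k, IsUpperTriangular A → A.BlockTriangular id := by
    intro A hA i j hij; exact hA i j hij
  set A₁ : Matrix (Fin n) (Fin n) k := (b₁ : Matrix (Fin n) (Fin n) k) with hA₁
  set A₂ : Matrix (Fin n) (Fin n) k := (b₂ : Matrix (Fin n) (Fin n) k) with hA₂
  set A₃ : Matrix (Fin n) (Fin n) k := (b₃ : Matrix (Fin n) (Fin n) k) with hA₃
  set A₄ : Matrix (Fin n) (Fin n) k := (b₄ : Matrix (Fin n) (Fin n) k) with hA₄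
  have hb1 : IsUnit A₁ := ⟨b₁, rfl⟩
  have hb2 : IsUnit A₂ := ⟨b₂, rfl⟩
  have hb3 : IsUnit A₃ := ⟨b₃, rfl⟩
  have hd1 : IsUnit A₁.det := (Matrix.isUnit_iff_isUnit_det _).mp hb1
  have hd2 : IsUnit A₂.det := (Matrix.isUnit_iff_isUnit_det _).mp hb2
  have hd3 : IsUnit A₃.det := (Matrix.isUnit_iff_isUnit_det _).mp hb3
  set M : Matrix (Fin n) (Fin n) k := A₃⁻¹ * A₁ with hM
  set N : Matrix (Fin n) (Fin n) k := A₄ * A₂⁻¹ with hN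
  have hMN : M * permMat σ = permMat τ * N := by
    have h3 : A₃⁻¹ * A₃ = 1 := Matrix.nonsing_inv_mul _ hd3
    have h2 : A₂ * A₂⁻¹ = 1 := Matrix.mul_nonsing_inv _ hd2
    calc M * permMat σ
        = A₃⁻¹ * (A₁ * permMat σ * A₂) * A₂⁻¹ := by
          rw [hM]
          conv_rhs => rw [mul_assoc A₃⁻¹, mul_assoc (A₁ * permMat σ), h2, mul_one,
            ← mul_assoc]
      _ = A₃⁻¹ * (A₃ * permMat τ * A₄) * A₂⁻¹ := by rw [h]
      _ = permMat τ * N := by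
          rw [mul_assoc A₃, ← mul_assoc A₃⁻¹ A₃, h3, one_mul, hN, mul_assoc]
  -- M and N are upper triangular
  haveI : Invertible A₃ := Matrix.invertibleOfIsUnitDet _ hd3
  haveI : Invertible A₂ := Matrix.invertibleOfIsUnitDet _ hd2
  have hMtri : M.BlockTriangular id :=
    (Matrix.blockTriangular_inv_of_blockTriangular (tri _ h₃)).mul (tri _ h₁)
  have hNtri : N.BlockTriangular id :=
    (tri _ h₄).mul (Matrix.blockTriangular_inv_of_blockTriangular (tri _ h₂))
  -- diagonal of M is nonzero
  have hMdet : IsUnit M.det := by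
    rw [hM, Matrix.det_mul]
    exact (A₃.isUnit_nonsing_inv_det hd3).mul hd1
  have hMdiag : ∀ i, M i i ≠ 0 := by
    have hprod : (∏ i, M i i) ≠ 0 := by
      rw [← Matrix.det_of_upperTriangular hMtri]
      exact hMdet.ne_zero
    intro i
    exact Finset.prod_ne_zero_iff.mp hprod i (Finset.mem_univ i)
  -- key entrywise identity
  have key : ∀ i j, M i (σ j) = N (τ⁻¹ i) j := by
    intro i j
    have heq : (M * permMat σ : Matrix (Fin n) (Fin n) k) i j = (permMat τ * N : Matrix (Fin n) (Fin n) k) i j := by rw [hMN]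
    have hl : (M * permMat σ : Matrix (Fin n) (Fin n) k) i j = M i (σ j) := by
      simp [Matrix.mul_apply, permMat, mul_ite, mul_one, mul_zero]
    have hr : (permMat τ * N : Matrix (Fin n) (Fin n) k) i j = N (τ⁻¹ i) j := by
      simp only [Matrix.mul_apply, permMat, Matrix.of_apply, ite_mul, one_mul, zero_mul]
      rw [Finset.sum_eq_single (τ⁻¹ i)]
      · simp
      · intro b _ hb
        rw [if_neg]
        intro hib
        exact hb (by simp [hib])
      · simp
    rw [hl, hr] at heq
    exact heq
  -- deduce τ⁻¹ (σ j) ≤ j for all j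
  have hle : ∀ j, (τ⁻¹ * σ) j ≤ j := by
    intro j
    by_contra hlt
    push_neg at hlt
    have h0 : N (τ⁻¹ (σ j)) j = 0 := hNtri hlt
    have := key (σ j) j
    rw [h0] at this
    exact hMdiag (σ j) this
  have := perm_le_eq_one _ hle
  have h' : τ * (τ⁻¹ * σ) = τ * 1 := by rw [this]
  simpa [mul_assoc] using h'
end

section
/- Let k be a field and n ≥ 1. The map sending σ ∈ S_n to the double coset B P_σ B is a bijection from the symmetric group S_n onto the set of (B,B)-double cosets of GL_n(k); in particular GL_n(k) has exactly n! double cosets with respect to B. -/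
/-- The `(B,B)`-double coset `B A B` of a matrix `A`, where `B` is the group of
invertible upper triangular matrices. -/
def doubleCoset {k : Type*} [Field k] {n : ℕ} (A : Matrix (Fin n) (Fin n) k) :
    Set (Matrix (Fin n) (Fin n) k) :=
  {M | ∃ b₁ b₂ : Matrix (Fin n) (Fin n) k, IsUpperTriangular b₁ ∧ IsUpperTriangular b₂ ∧
    IsUnit b₁.det ∧ IsUnit b₂.det ∧ M = b₁ * A * b₂}

/-
The cells `B P_σ B` are pairwise distinct: if `P_τ = b₁ P_σ b₂`, the `(τ j, j)` entry of
`P_τ b₂⁻¹ = b₁ P_σ` is a diagonal entry of `b₂⁻¹`, hence `b₁ (τ j) (σ j) ≠ 0` and `τ j ≤ σ j`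
for every `j`, which forces `τ = σ`.

They cover `GL_n(k)`: their union is stable under left multiplication by `B`, and by `P_s` for
an adjacent transposition `s`, since `s B w ⊆ B s w B ∪ B w B`. Hence it is stable under all
permutation matrices and all transvections (a lower one is conjugate to an upper one by a
permutation matrix), which generate `GL_n(k)` together with the invertible diagonal matrices.
-/

open Matrix hiding IsUpperTriangular
open Equiv

section

variable {k : Type*} [Field k] {n : ℕ}

variable (k n) in
def borelSubmonoid : Submonoid (Matrix (Fin n) (Fin n) k) where
  carrier := {b | b.IsUpperTriangular ∧ IsUnit b.det}
  mul_mem' ha hb := ⟨ha.1.mul hb.1, by rw [det_mul]; exact ha.2.mul hb.2⟩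
  one_mem' := ⟨blockTriangular_one, by simp⟩

theorem inv_mem_borelSubmonoid {b : Matrix (Fin n) (Fin n) k} (hb : b ∈ borelSubmonoid k n) :
    b⁻¹ ∈ borelSubmonoid k n := by
  have := invertibleOfIsUnitDet b hb.2
  exact ⟨blockTriangular_inv_of_blockTriangular hb.1, isUnit_nonsing_inv_det b hb.2⟩

theorem diag_ne_zero_of_mem_borelSubmonoid {b : Matrix (Fin n) (Fin n) k}
    (hb : b ∈ borelSubmonoid k n) (i : Fin n) : b i i ≠ 0 := by
  have hdet := hb.2
  rw [det_of_isUpperTriangular hb.1, isUnit_iff_ne_zero, Finset.prod_ne_zero_iff] at hdet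
  exact hdet i (Finset.mem_univ i)

theorem transvection_mem_borelSubmonoid {i j : Fin n} (hij : i < j) (c : k) :
    transvection i j c ∈ borelSubmonoid k n :=
  ⟨blockTriangular_transvection hij.le c,
    by rw [det_transvection_of_ne i j hij.ne c]; exact isUnit_one⟩

theorem diagonal_mem_borelSubmonoid {d : Fin n → k} (hd : (diagonal d).det ≠ 0) :
    diagonal d ∈ borelSubmonoid k n :=
  ⟨blockTriangular_diagonal d, isUnit_iff_ne_zero.mpr hd⟩

theorem mem_doubleCoset {A M : Matrix (Fin n) (Fin n) k} :
    M ∈ doubleCoset A ↔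
      ∃ b₁ ∈ borelSubmonoid k n, ∃ b₂ ∈ borelSubmonoid k n, M = b₁ * A * b₂ := by
  constructor
  · rintro ⟨b₁, b₂, h₁, h₂, hd₁, hd₂, rfl⟩
    exact ⟨b₁, ⟨h₁, hd₁⟩, b₂, ⟨h₂, hd₂⟩, rfl⟩
  · rintro ⟨b₁, ⟨h₁, hd₁⟩, b₂, ⟨h₂, hd₂⟩, rfl⟩
    exact ⟨b₁, b₂, h₁, h₂, hd₁, hd₂, rfl⟩

theorem mul_mem_doubleCoset_left {A M b : Matrix (Fin n) (Fin n) k} (hb : b ∈ borelSubmonoid k n)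
    (hM : M ∈ doubleCoset A) : b * M ∈ doubleCoset A := by
  obtain ⟨b₁, h₁, b₂, h₂, rfl⟩ := mem_doubleCoset.mp hM
  exact mem_doubleCoset.mpr ⟨b * b₁, mul_mem hb h₁, b₂, h₂, by simp only [Matrix.mul_assoc]⟩

theorem mul_mem_doubleCoset_right {A M b : Matrix (Fin n) (Fin n) k} (hM : M ∈ doubleCoset A)
    (hb : b ∈ borelSubmonoid k n) : M * b ∈ doubleCoset A := by
  obtain ⟨b₁, h₁, b₂, h₂, rfl⟩ := mem_doubleCoset.mp hM
  exact mem_doubleCoset.mpr ⟨b₁, h₁, b₂ * b, mul_mem h₂ hb, by simp only [Matrix.mul_assoc]⟩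

theorem self_mem_doubleCoset (A : Matrix (Fin n) (Fin n) k) : A ∈ doubleCoset A :=
  mem_doubleCoset.mpr ⟨1, one_mem _, 1, one_mem _, by simp⟩

theorem doubleCoset_subset_of_mem {A M : Matrix (Fin n) (Fin n) k} (hM : M ∈ doubleCoset A) :
    doubleCoset M ⊆ doubleCoset A := by
  intro X hX
  obtain ⟨c₁, h₁, c₂, h₂, rfl⟩ := mem_doubleCoset.mp hX
  exact mul_mem_doubleCoset_right (mul_mem_doubleCoset_left h₁ hM) h₂

theorem mem_doubleCoset_symm {A M : Matrix (Fin n) (Fin n) k} (hM : M ∈ doubleCoset A) :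
    A ∈ doubleCoset M := by
  obtain ⟨b₁, h₁, b₂, h₂, rfl⟩ := mem_doubleCoset.mp hM
  refine mem_doubleCoset.mpr
    ⟨b₁⁻¹, inv_mem_borelSubmonoid h₁, b₂⁻¹, inv_mem_borelSubmonoid h₂, ?_⟩
  simp only [Matrix.mul_assoc, mul_nonsing_inv _ h₂.2, Matrix.mul_one]
  rw [← Matrix.mul_assoc, nonsing_inv_mul _ h₁.2, Matrix.one_mul]

theorem doubleCoset_eq_of_mem {A M : Matrix (Fin n) (Fin n) k} (hM : M ∈ doubleCoset A) :
    doubleCoset M = doubleCoset A :=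
  (doubleCoset_subset_of_mem hM).antisymm (doubleCoset_subset_of_mem (mem_doubleCoset_symm hM))

theorem permMat_eq_permMatrixHom (σ : Perm (Fin n)) :
    permMat (k := k) σ = permMatrixHom (R := k) σ := by
  ext i j
  simp [permMat, PEquiv.toMatrix_apply, Equiv.symm_apply_eq]

theorem permMat_mul (σ τ : Perm (Fin n)) :
    permMat (k := k) (σ * τ) = permMat σ * permMat τ := by
  simp only [permMat_eq_permMatrixHom, map_mul]

theorem permMat_one : permMat (k := k) (1 : Perm (Fin n)) = 1 := by
  simp only [permMat_eq_permMatrixHom, map_one]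

theorem permMat_mul_permMat_inv (σ : Perm (Fin n)) :
    permMat (k := k) σ * permMat σ⁻¹ = 1 := by
  rw [← permMat_mul, mul_inv_cancel, permMat_one]

theorem isUnit_det_permMat (σ : Perm (Fin n)) : IsUnit (permMat (k := k) σ).det := by
  rw [permMat_eq_permMatrixHom, permMatrixHom_apply, det_permutation]
  exact (Perm.sign σ⁻¹).isUnit.map (Int.castRingHom k)

theorem permMat_mul_eq_submatrix (σ : Perm (Fin n)) (M : Matrix (Fin n) (Fin n) k) :
    permMat σ * M = M.submatrix ⇑σ⁻¹ id := by
  rw [permMat_eq_permMatrixHom, permMatrixHom_apply, PEquiv.toMatrix_toPEquiv_mul]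

theorem mul_permMat_eq_submatrix (σ : Perm (Fin n)) (M : Matrix (Fin n) (Fin n) k) :
    M * permMat σ = M.submatrix id σ := by
  rw [permMat_eq_permMatrixHom, permMatrixHom_apply, PEquiv.mul_toMatrix_toPEquiv]
  rfl

theorem mul_permMat (σ : Perm (Fin n)) (M : Matrix (Fin n) (Fin n) k) :
    M * permMat σ = permMat σ * M.submatrix σ σ := by
  rw [mul_permMat_eq_submatrix, permMat_mul_eq_submatrix, submatrix_submatrix]
  ext i j
  simp

theorem perm_eq_of_forall_apply_le {σ τ : Perm (Fin n)} (h : ∀ j, τ j ≤ σ j) : τ = σ := by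
  have hsum : ∑ j, (τ j : ℕ) = ∑ j, (σ j : ℕ) := by
    rw [Equiv.sum_comp τ (fun x : Fin n => (x : ℕ)), Equiv.sum_comp σ (fun x : Fin n => (x : ℕ))]
  have heq := (Finset.sum_eq_sum_iff_of_le fun j _ => Fin.le_iff_val_le_val.mp (h j)).mp hsum
  exact Equiv.ext fun j => Fin.ext (heq j (Finset.mem_univ j))

theorem eq_of_permMat_mem_doubleCoset {σ τ : Perm (Fin n)}
    (h : permMat (k := k) τ ∈ doubleCoset (permMat σ)) : σ = τ := by
  obtain ⟨b₁, h₁, b₂, h₂, hτ⟩ := mem_doubleCoset.mp h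
  have key : permMat τ * b₂⁻¹ = b₁ * permMat σ := by
    rw [hτ, Matrix.mul_assoc, mul_nonsing_inv _ h₂.2, Matrix.mul_one]
  refine (perm_eq_of_forall_apply_le fun j => not_lt.mp fun hlt => ?_).symm
  have hentry := congr_fun₂ key (τ j) j
  simp only [permMat_mul_eq_submatrix, mul_permMat_eq_submatrix, submatrix_apply, id,
    Perm.coe_inv, symm_apply_apply] at hentry
  exact diag_ne_zero_of_mem_borelSubmonoid (inv_mem_borelSubmonoid h₂) j
    (hentry.trans (h₁.1 hlt))

theorem swap_lt_swap_of_lt {i j p q : Fin n} (hij : (j : ℕ) = i + 1) (hpq : q < p)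
    (hne : ¬(p = j ∧ q = i)) : swap i j q < swap i j p := by
  simp only [swap_apply_def]
  rw [Fin.lt_def] at hpq ⊢
  rw [not_and_or] at hne
  split_ifs <;> simp_all [Fin.ext_iff] <;> omega

theorem submatrix_swap_mem_borelSubmonoid {i j : Fin n} (hij : (j : ℕ) = i + 1)
    {b : Matrix (Fin n) (Fin n) k} (hb : b ∈ borelSubmonoid k n) (h0 : b i j = 0) :
    b.submatrix (swap i j) (swap i j) ∈ borelSubmonoid k n := by
  refine ⟨fun p q hpq => ?_, by rw [det_submatrix_equiv_self]; exact hb.2⟩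
  by_cases hc : p = j ∧ q = i
  · simpa [hc.1, hc.2] using h0
  · exact hb.1 (swap_lt_swap_of_lt hij hpq hc)

theorem exists_eq_mul_transvection {i j : Fin n} (hij : i < j) {b : Matrix (Fin n) (Fin n) k}
    (hb : b ∈ borelSubmonoid k n) :
    ∃ b' ∈ borelSubmonoid k n, b' i j = 0 ∧ ∃ c : k, b = b' * transvection i j c := by
  refine ⟨b * transvection i j (-(b i j / b i i)),
    mul_mem hb (transvection_mem_borelSubmonoid hij _), ?_, b i j / b i i, ?_⟩
  · rw [mul_transvection_apply_same]
    field_simp [diag_ne_zero_of_mem_borelSubmonoid hb i]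
    ring
  · rw [Matrix.mul_assoc, transvection_mul_transvection_same _ _ hij.ne, neg_add_cancel,
      transvection_zero, Matrix.mul_one]

theorem submatrix_transvection (w : Perm (Fin n)) (i j : Fin n) (c : k) :
    (transvection i j c).submatrix w w = transvection (w⁻¹ i) (w⁻¹ j) c := by
  ext p q
  simp only [transvection, submatrix_apply, Matrix.add_apply, one_apply, single_apply,
    EmbeddingLike.apply_eq_iff_eq, Perm.coe_inv, Equiv.symm_apply_eq]

theorem permMat_swap_mul_self (i j : Fin n) :
    permMat (k := k) (swap i j) * permMat (swap i j) = 1 := by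
  rw [← permMat_mul, Equiv.swap_mul_self, permMat_one]

theorem permMat_swap_conj {i j : Fin n} (M : Matrix (Fin n) (Fin n) k) :
    permMat (swap i j) * M * permMat (swap i j) = M.submatrix (swap i j) (swap i j) := by
  rw [Matrix.mul_assoc, mul_permMat, ← Matrix.mul_assoc, permMat_swap_mul_self, Matrix.one_mul]

theorem transvection_mul_permMat_swap_mul_transvection_apply {i j : Fin n} (hij : i ≠ j)
    {c : k} (hc : c ≠ 0) {a b : Fin n} (hab : a ≠ b) (h : ¬(a = j ∧ b = i)) :
    (transvection i j (-c⁻¹) * permMat (swap i j) * transvection i j c :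
      Matrix (Fin n) (Fin n) k) a b = 0 := by
  rw [Matrix.mul_assoc, permMat_mul_eq_submatrix]
  by_cases ha : a = i
  · subst ha
    rw [transvection_mul_apply_same]
    by_cases hjb : j = b <;> simp [transvection, one_apply, hij, hab, hc, hjb]
  · rw [transvection_mul_apply_of_ne _ _ _ _ ha]
    rcases eq_or_ne a j with rfl | haj
    · simp_all [transvection, one_apply, eq_comm]
    · simp [transvection, one_apply, swap_apply_def, ha, haj, hab, Ne.symm ha]

theorem mul_permMat_mem_doubleCoset_permMat {M : Matrix (Fin n) (Fin n) k} (w : Perm (Fin n))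
    (hM : M.submatrix w w ∈ borelSubmonoid k n) : M * permMat w ∈ doubleCoset (permMat w) := by
  rw [mul_permMat]
  simpa using mul_mem_doubleCoset_right (self_mem_doubleCoset (permMat w)) hM

theorem permMat_swap_mul_transvection_mul_permMat_mem {i j : Fin n} (hij : (j : ℕ) = i + 1)
    (c : k) (w : Perm (Fin n)) :
    permMat (swap i j) * transvection i j c * permMat w ∈
      doubleCoset (permMat (swap i j * w)) ∪ doubleCoset (permMat w) := by
  have hlt : i < j := by rw [Fin.lt_def]; omega
  by_cases hw : w⁻¹ i < w⁻¹ j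
  · left
    rw [Matrix.mul_assoc, mul_permMat, submatrix_transvection, ← Matrix.mul_assoc, ← permMat_mul]
    exact mul_mem_doubleCoset_right (self_mem_doubleCoset _)
      (transvection_mem_borelSubmonoid hw c)
  rcases eq_or_ne c 0 with rfl | hc
  · left
    rw [transvection_zero, Matrix.mul_one, ← permMat_mul]
    exact self_mem_doubleCoset _
  right
  -- `X` is upper triangular apart from its `(j, i)` entry, which conjugation by `P_w` moves
  -- above the diagonal because `w⁻¹ j < w⁻¹ i`.
  set X := transvection i j (-c⁻¹) * permMat (swap i j) * transvection i j c
  have hX : permMat (swap i j) * transvection i j c = transvection i j c⁻¹ * X := by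
    rw [← Matrix.mul_assoc, ← Matrix.mul_assoc, transvection_mul_transvection_same _ _ hlt.ne,
      add_neg_cancel, transvection_zero, Matrix.one_mul]
  have hXw : X.submatrix w w ∈ borelSubmonoid k n := by
    refine ⟨fun p q hpq => ?_, ?_⟩
    · refine transvection_mul_permMat_swap_mul_transvection_apply hlt.ne hc
        (w.injective.ne hpq.ne') fun ⟨hp, hq⟩ => hw ?_
      rw [← hp, ← hq]
      simpa using hpq
    · rw [det_submatrix_equiv_self, det_mul, det_mul, det_transvection_of_ne _ _ hlt.ne,
        det_transvection_of_ne _ _ hlt.ne, one_mul, mul_one]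
      exact isUnit_det_permMat _
  rw [hX, Matrix.mul_assoc]
  exact mul_mem_doubleCoset_left (transvection_mem_borelSubmonoid hlt _)
    (mul_permMat_mem_doubleCoset_permMat w hXw)

theorem permMat_swap_mul_mul_permMat_mem {i j : Fin n} (hij : (j : ℕ) = i + 1)
    {b : Matrix (Fin n) (Fin n) k} (hb : b ∈ borelSubmonoid k n) (w : Perm (Fin n)) :
    permMat (swap i j) * b * permMat w ∈
      doubleCoset (permMat (swap i j * w)) ∪ doubleCoset (permMat w) := by
  have hlt : i < j := by rw [Fin.lt_def]; omega
  obtain ⟨b', hb', h0, c, rfl⟩ := exists_eq_mul_transvection hlt hb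
  have hfactor : permMat (swap i j) * (b' * transvection i j c) * permMat w =
      b'.submatrix (swap i j) (swap i j) *
        (permMat (swap i j) * transvection i j c * permMat w) := by
    rw [← permMat_swap_conj]
    simp only [Matrix.mul_assoc]
    rw [← Matrix.mul_assoc (permMat (swap i j)) (permMat (swap i j)), permMat_swap_mul_self,
      Matrix.one_mul]
  rw [hfactor]
  rcases permMat_swap_mul_transvection_mul_permMat_mem hij c w with h | h
  exacts [Or.inl (mul_mem_doubleCoset_left (submatrix_swap_mem_borelSubmonoid hij hb' h0) h),
    Or.inr (mul_mem_doubleCoset_left (submatrix_swap_mem_borelSubmonoid hij hb' h0) h)]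

variable (k n) in
def bruhatCells : Set (Matrix (Fin n) (Fin n) k) :=
  ⋃ σ : Perm (Fin n), doubleCoset (permMat σ)

theorem mem_bruhatCells {M : Matrix (Fin n) (Fin n) k} :
    M ∈ bruhatCells k n ↔ ∃ σ : Perm (Fin n), M ∈ doubleCoset (permMat σ) :=
  Set.mem_iUnion

theorem mul_mem_bruhatCells_of_mem_borelSubmonoid {b M : Matrix (Fin n) (Fin n) k}
    (hb : b ∈ borelSubmonoid k n) (hM : M ∈ bruhatCells k n) : b * M ∈ bruhatCells k n := by
  obtain ⟨σ, hσ⟩ := mem_bruhatCells.mp hM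
  exact mem_bruhatCells.mpr ⟨σ, mul_mem_doubleCoset_left hb hσ⟩

theorem permMat_swap_mul_mem_bruhatCells {i j : Fin n} (hij : (j : ℕ) = i + 1)
    {M : Matrix (Fin n) (Fin n) k} (hM : M ∈ bruhatCells k n) :
    permMat (swap i j) * M ∈ bruhatCells k n := by
  obtain ⟨w, hw⟩ := mem_bruhatCells.mp hM
  obtain ⟨b₁, h₁, b₂, h₂, rfl⟩ := mem_doubleCoset.mp hw
  rw [← Matrix.mul_assoc, ← Matrix.mul_assoc]
  rcases permMat_swap_mul_mul_permMat_mem hij h₁ w with h | h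
  exacts [mem_bruhatCells.mpr ⟨_, mul_mem_doubleCoset_right h h₂⟩,
    mem_bruhatCells.mpr ⟨_, mul_mem_doubleCoset_right h h₂⟩]

theorem permMat_mul_mem_bruhatCells (σ : Perm (Fin n)) {M : Matrix (Fin n) (Fin n) k}
    (hM : M ∈ bruhatCells k n) : permMat σ * M ∈ bruhatCells k n := by
  cases n with
  | zero => rwa [Subsingleton.elim σ 1, permMat_one, Matrix.one_mul]
  | succ m =>
    have hσ : σ ∈ Submonoid.closure (Set.range fun i : Fin m => swap i.castSucc i.succ) := by
      rw [Perm.mclosure_swap_castSucc_succ]; trivial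
    induction hσ using Submonoid.closure_induction generalizing M with
    | mem τ hτ =>
      obtain ⟨i, rfl⟩ := hτ
      exact permMat_swap_mul_mem_bruhatCells (by simp) hM
    | one => rwa [permMat_one, Matrix.one_mul]
    | mul τ ρ _ _ hτ hρ => rw [permMat_mul, Matrix.mul_assoc]; exact hτ (hρ hM)

theorem transvection_mul_mem_bruhatCells (t : TransvectionStruct (Fin n) k)
    {M : Matrix (Fin n) (Fin n) k} (hM : M ∈ bruhatCells k n) :
    t.toMatrix * M ∈ bruhatCells k n := by
  obtain ⟨i, j, hij, c⟩ := t
  rw [TransvectionStruct.toMatrix_mk]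
  rcases hij.lt_or_gt with hlt | hgt
  · exact mul_mem_bruhatCells_of_mem_borelSubmonoid (transvection_mem_borelSubmonoid hlt c) hM
  have hconj : transvection i j c =
      permMat (swap i j) * transvection j i c * permMat (swap i j)⁻¹ := by
    have := mul_permMat (swap i j) (transvection i j c)
    rw [submatrix_transvection, swap_inv, swap_apply_left, swap_apply_right] at this
    rw [← this, Matrix.mul_assoc, permMat_mul_permMat_inv, Matrix.mul_one]
  rw [hconj, Matrix.mul_assoc, Matrix.mul_assoc]
  exact permMat_mul_mem_bruhatCells _ (mul_mem_bruhatCells_of_mem_borelSubmonoid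
    (transvection_mem_borelSubmonoid hgt c) (permMat_mul_mem_bruhatCells _ hM))

theorem mem_bruhatCells_of_isUnit_det {A : Matrix (Fin n) (Fin n) k} (hA : IsUnit A.det) :
    A ∈ bruhatCells k n := by
  suffices h : ∀ M ∈ bruhatCells k n, A * M ∈ bruhatCells k n by
    simpa using h 1 (mem_bruhatCells.mpr ⟨1, by rw [permMat_one]; exact self_mem_doubleCoset 1⟩)
  refine diagonal_transvection_induction_of_det_ne_zero
    (fun A => ∀ M ∈ bruhatCells k n, A * M ∈ bruhatCells k n) A (isUnit_iff_ne_zero.mp hA)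
    (fun D hD M hM =>
      mul_mem_bruhatCells_of_mem_borelSubmonoid (diagonal_mem_borelSubmonoid hD) hM)
    (fun t M hM => transvection_mul_mem_bruhatCells t hM) fun B C _ _ hB hC M hM => ?_
  rw [Matrix.mul_assoc]
  exact hB _ (hC M hM)

theorem bijOn_doubleCoset_permMat :
    Set.BijOn (fun σ : Perm (Fin n) => doubleCoset (permMat (k := k) σ)) Set.univ
      {S | ∃ A : Matrix (Fin n) (Fin n) k, IsUnit A.det ∧ S = doubleCoset A} := by
  refine ⟨fun σ _ => ⟨permMat σ, isUnit_det_permMat σ, rfl⟩, fun σ _ τ _ h => ?_, ?_⟩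
  · have hστ : doubleCoset (permMat (k := k) σ) = doubleCoset (permMat τ) := h
    exact (eq_of_permMat_mem_doubleCoset (hστ ▸ self_mem_doubleCoset _)).symm
  · rintro S ⟨A, hA, rfl⟩
    obtain ⟨σ, hσ⟩ := mem_bruhatCells.mp (mem_bruhatCells_of_isUnit_det hA)
    exact ⟨σ, Set.mem_univ σ, (doubleCoset_eq_of_mem hσ).symm⟩

end

theorem bruhat_double_cosets_bijection_general {k : Type*} [Field k] {n : ℕ} :
    Set.BijOn (fun σ : Equiv.Perm (Fin n) => doubleCoset (permMat (k := k) σ)) Set.univ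
      {S : Set (Matrix (Fin n) (Fin n) k) |
        ∃ A : Matrix (Fin n) (Fin n) k, IsUnit A.det ∧ S = doubleCoset A} ∧
    Nat.card {S : Set (Matrix (Fin n) (Fin n) k) |
        ∃ A : Matrix (Fin n) (Fin n) k, IsUnit A.det ∧ S = doubleCoset A} = Nat.factorial n := by
  refine ⟨bijOn_doubleCoset_permMat, ?_⟩
  rw [← Nat.card_congr bijOn_doubleCoset_permMat.equiv, Nat.card_congr (Equiv.Set.univ _),
    Nat.card_eq_fintype_card, Fintype.card_perm, Fintype.card_fin]

/-- The Bruhat decomposition of `GL_n(k)`: the map `σ ↦ B P_σ B` is a bijection from the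
symmetric group `S_n` onto the set of `(B,B)`-double cosets of `GL_n(k)`;
in particular there are exactly `n!` double cosets. -/
theorem bruhat_double_cosets_bijection {k : Type*} [Field k] {n : ℕ} (hn : 1 ≤ n) :
    Set.BijOn (fun σ : Equiv.Perm (Fin n) => doubleCoset (permMat (k := k) σ)) Set.univ
      {S : Set (Matrix (Fin n) (Fin n) k) |
        ∃ A : Matrix (Fin n) (Fin n) k, IsUnit A.det ∧ S = doubleCoset A} ∧
    Nat.card {S : Set (Matrix (Fin n) (Fin n) k) |
        ∃ A : Matrix (Fin n) (Fin n) k, IsUnit A.det ∧ S = doubleCoset A} = Nat.factorial n :=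
  bruhat_double_cosets_bijection_general
end

section
/- Let k be a field and n ≥ 1. Every matrix A ∈ SL_n(k) can be written as A = b₁ · M · b₂ where b₁, b₂ are upper triangular matrices of determinant 1 and M is an invertible monomial matrix of determinant 1 (i.e. M has exactly one nonzero entry in each row and each column); moreover the permutation σ ∈ S_n recording the positions of the nonzero entries of M (M_{i,j} ≠ 0 iff i = σ(j)) is uniquely determined by A. (Gelfand–Naimark's Bruhat decomposition for SL_n.) -/
namespace Matrix

section Triangular

variable {ι R : Type*} [Fintype ι] [DecidableEq ι] [CommRing R] {M : Matrix ι ι R}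

theorem BlockTriangular.nonsing_inv {α : Type*} [LinearOrder α] {b : ι → α}
    (h : M.BlockTriangular b) : M⁻¹.BlockTriangular b := by
  by_cases hM : IsUnit M.det
  · have := M.invertibleOfIsUnitDet hM
    exact blockTriangular_inv_of_blockTriangular h
  · rw [nonsing_inv_apply_not_isUnit M hM]
    exact blockTriangular_zero

variable [LinearOrder ι]

theorem diag_ne_zero_of_isUpperTriangular (h : M.IsUpperTriangular) (hM : M.det ≠ 0) (i : ι) :
    M i i ≠ 0 := fun hi =>
  hM ((det_of_isUpperTriangular h).trans (Finset.prod_eq_zero (Finset.mem_univ i) hi))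

omit [Fintype ι] in
theorem isUpperTriangular_one_add_vecMulVec {x y : ι → R}
    (hxy : ∀ i j, j ≤ i → x i * y j = 0) : (1 + vecMulVec x y).IsUpperTriangular :=
  fun i j (hji : j < i) => by
    rw [add_apply, one_apply_ne (ne_of_lt hji).symm, vecMulVec_apply, hxy i j hji.le, zero_add]

theorem det_one_add_vecMulVec_of_le {x y : ι → R}
    (hxy : ∀ i j, j ≤ i → x i * y j = 0) : (1 + vecMulVec x y).det = 1 := by
  rw [det_of_isUpperTriangular (isUpperTriangular_one_add_vecMulVec hxy)]
  exact Finset.prod_eq_one fun i _ => by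
    rw [add_apply, one_apply_eq, vecMulVec_apply, hxy i i le_rfl, add_zero]

theorem exists_last_ne_zero_of_det_ne_zero (hM : M.det ≠ 0) (j : ι) :
    ∃ r, M r j ≠ 0 ∧ ∀ i, r < i → M i j = 0 := by
  classical
  have hcol : (Finset.univ.filter fun i => M i j ≠ 0).Nonempty := by
    by_contra hempty
    exact hM (det_eq_zero_of_column_eq_zero j fun i =>
      by_contra fun hi => hempty ⟨i, by simpa using hi⟩)
  obtain ⟨r, hr, hmax⟩ := Finset.exists_max_image _ id hcol
  exact ⟨r, by simpa using hr, fun i hri =>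
    by_contra fun hi => (hmax i (by simpa using hi)).not_gt hri⟩

end Triangular

section Pivot

variable {ι R : Type*}

structure IsPivot [Zero R] (B : Matrix ι ι R) (i j : ι) : Prop where
  ne_zero : B i j ≠ 0
  col_eq_zero : ∀ i', i' ≠ i → B i' j = 0
  row_eq_zero : ∀ j', j' ≠ j → B i j' = 0

theorem IsPivot.add_vecMulVec [NonUnitalNonAssocSemiring R] {B : Matrix ι ι R} {i j : ι}
    {x y : ι → R} (h : B.IsPivot i j) (hx : x i = 0) (hy : y j = 0) :
    (B + vecMulVec x y).IsPivot i j where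
  ne_zero := by simpa [vecMulVec_apply, hx] using h.ne_zero
  col_eq_zero i' hi' := by simp [vecMulVec_apply, hy, h.col_eq_zero i' hi']
  row_eq_zero j' hj' := by simp [vecMulVec_apply, hx, h.row_eq_zero j' hj']

theorem IsPivot.apply_eq_zero_of_ne [Zero R] {B : Matrix ι ι R} {i j l r : ι}
    (h : B.IsPivot i l) (hl : l ≠ j) (hr : B r j ≠ 0) : B r l = 0 :=
  h.col_eq_zero r fun hri => hr (hri ▸ h.row_eq_zero j hl.symm)

variable [Fintype ι] [DecidableEq ι] [Semiring R]

theorem one_add_vecMulVec_single_mul (x : ι → R) (r : ι) (B : Matrix ι ι R) :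
    (1 + vecMulVec x (Pi.single r 1)) * B = B + vecMulVec x (B r) := by
  rw [add_mul, one_mul, vecMulVec_mul, single_one_vecMul]
  rfl

theorem mul_one_add_single_vecMulVec (B : Matrix ι ι R) (j : ι) (y : ι → R) :
    B * (1 + vecMulVec (Pi.single j 1) y) = B + vecMulVec (fun i => B i j) y := by
  rw [mul_add, mul_one, mul_vecMulVec, mulVec_single_one]
  rfl

end Pivot

section Elimination

variable {ι K : Type*} [Fintype ι] [LinearOrder ι] [DecidableEq ι] [Field K]

theorem exists_mul_eq_zero_above (B : Matrix ι ι K) {r j : ι} (hr : B r j ≠ 0)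
    (hbelow : ∀ i, r < i → B i j = 0) :
    ∃ u : Matrix ι ι K, u.IsUpperTriangular ∧ u.det = 1 ∧ (u * B) r = B r ∧
      (∀ i, i ≠ r → (u * B) i j = 0) ∧
      ∀ i l, l ≠ j → B.IsPivot i l → (u * B).IsPivot i l := by
  set d : ι → K := fun i => if i < r then -(B i j / B r j) else 0
  have hd : ∀ i c, c ≤ i → d i * (Pi.single r 1 : ι → K) c = 0 := by
    intro i c hci
    by_cases hc : c = r
    · subst hc; simp [d, not_lt.mpr hci]
    · simp [hc]
  refine ⟨1 + vecMulVec d (Pi.single r 1), isUpperTriangular_one_add_vecMulVec hd,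
    det_one_add_vecMulVec_of_le hd, ?_, ?_, ?_⟩ <;> rw [one_add_vecMulVec_single_mul]
  · ext c; simp [vecMulVec_apply, d]
  · intro i hi
    rcases hi.lt_or_gt with hir | hri
    · simp [vecMulVec_apply, d, hir, hr]
    · simp [vecMulVec_apply, d, hbelow i hri, not_lt.mpr hri.le]
  · exact fun i l hl h =>
      h.add_vecMulVec (by simp [d, h.row_eq_zero j hl.symm]) (h.apply_eq_zero_of_ne hl hr)

theorem exists_isPivot_mul_of_col (B : Matrix ι ι K) {r j : ι} (hr : B r j ≠ 0)
    (hcol : ∀ i, i ≠ r → B i j = 0) (hleft : ∀ c, c < j → B r c = 0) :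
    ∃ v : Matrix ι ι K, v.IsUpperTriangular ∧ v.det = 1 ∧ (B * v).IsPivot r j ∧
      ∀ i l, l ≠ j → B.IsPivot i l → (B * v).IsPivot i l := by
  set e : ι → K := fun c => if j < c then -(B r c / B r j) else 0
  have he : ∀ i c, c ≤ i → (Pi.single j 1 : ι → K) i * e c = 0 := by
    intro i c hci
    by_cases hi : i = j
    · subst hi; simp [e, not_lt.mpr hci]
    · simp [hi]
  refine ⟨1 + vecMulVec (Pi.single j 1) e, isUpperTriangular_one_add_vecMulVec he,
    det_one_add_vecMulVec_of_le he, ?_, ?_⟩ <;> rw [mul_one_add_single_vecMulVec]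
  · refine ⟨by simpa [vecMulVec_apply, e] using hr, fun i hi => ?_, fun c hc => ?_⟩
    · simp [vecMulVec_apply, e, hcol i hi]
    · rcases hc.lt_or_gt with hcj | hjc
      · simp [vecMulVec_apply, e, hleft c hcj, not_lt.mpr hcj.le]
      · simp [vecMulVec_apply, e, hjc, mul_div_cancel₀ _ hr]
  · exact fun i l hl h =>
      h.add_vecMulVec (h.row_eq_zero j hl.symm) (by simp [e, h.apply_eq_zero_of_ne hl hr])

theorem exists_isPivot_mul_mul (B : Matrix ι ι K) (hB : B.det ≠ 0) (j : ι)
    (hleft : ∀ c, c < j → ∃ i, B.IsPivot i c) :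
    ∃ u v : Matrix ι ι K, u.IsUpperTriangular ∧ v.IsUpperTriangular ∧ u.det = 1 ∧ v.det = 1 ∧
      (∃ r, (u * B * v).IsPivot r j) ∧ ∀ i l, l ≠ j → B.IsPivot i l → (u * B * v).IsPivot i l := by
  obtain ⟨r, hr, hbelow⟩ := exists_last_ne_zero_of_det_ne_zero hB j
  obtain ⟨u, hu, hud, hrow, hcol, hpiv⟩ := B.exists_mul_eq_zero_above hr hbelow
  obtain ⟨v, hv, hvd, hrj, hpiv'⟩ := (u * B).exists_isPivot_mul_of_col (by rwa [hrow]) hcol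
    fun c hc => by
      obtain ⟨i, hi⟩ := hleft c hc
      rw [hrow]
      exact hi.apply_eq_zero_of_ne hc.ne hr
  exact ⟨u, v, hu, hv, hud, hvd, ⟨r, hrj⟩, fun i l hl h => hpiv' i l hl (hpiv i l hl h)⟩

theorem exists_forall_isPivot (A : Matrix ι ι K) (hA : A.det ≠ 0) :
    ∃ u v : Matrix ι ι K, u.IsUpperTriangular ∧ v.IsUpperTriangular ∧ u.det = 1 ∧ v.det = 1 ∧
      ∀ j, ∃ i, (u * A * v).IsPivot i j := by
  classical
  suffices ∀ s : Finset ι, IsLowerSet (s : Set ι) → ∃ u v : Matrix ι ι K,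
      u.IsUpperTriangular ∧ v.IsUpperTriangular ∧ u.det = 1 ∧ v.det = 1 ∧
      ∀ j ∈ s, ∃ i, (u * A * v).IsPivot i j by
    simpa using this Finset.univ (by simpa using isLowerSet_univ)
  intro s
  induction s using Finset.induction_on_max with
  | empty => exact fun _ => ⟨1, 1, blockTriangular_one, blockTriangular_one, det_one, det_one, by simp⟩
  | insert j s hlt ih =>
    intro hs
    have hmem : ∀ c, c < j → c ∈ s := fun c hcj =>
      (Finset.mem_insert.mp (hs hcj.le (Finset.mem_insert_self j s))).resolve_left hcj.ne
    obtain ⟨u, v, hu, hv, hud, hvd, hpiv⟩ :=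
      ih fun a c hca ha => hmem c (hca.trans_lt (hlt a ha))
    obtain ⟨u', v', hu', hv', hud', hvd', ⟨r, hrj⟩, hpres⟩ := (u * A * v).exists_isPivot_mul_mul
      (by simp [det_mul, hud, hvd, hA]) j fun c hc => hpiv c (hmem c hc)
    refine ⟨u' * u, v * v', hu'.mul hu, hv.mul hv', by simp [hud, hud'], by simp [hvd, hvd'],
      fun l hl => ?_⟩
    rw [show u' * u * A * (v * v') = u' * (u * A * v) * v' by simp only [Matrix.mul_assoc]]
    rcases Finset.mem_insert.mp hl with rfl | hl
    · exact ⟨r, hrj⟩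
    · obtain ⟨i, hi⟩ := hpiv l hl
      exact ⟨i, hpres i l (hlt l hl).ne hi⟩

end Elimination

section Monomial

variable {ι R : Type*}

def IsMonomial [Zero R] (M : Matrix ι ι R) (σ : Equiv.Perm ι) : Prop :=
  ∀ i j, M i j ≠ 0 ↔ i = σ j

theorem exists_isMonomial_of_forall_isPivot [Finite ι] [Zero R] {B : Matrix ι ι R}
    (h : ∀ j, ∃ i, B.IsPivot i j) : ∃ σ, B.IsMonomial σ := by
  choose f hf using h
  have hf_inj : f.Injective := fun a b hab => by
    by_contra hne
    exact (hf b).ne_zero (hab ▸ (hf a).row_eq_zero b (Ne.symm hne))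
  refine ⟨Equiv.ofBijective f (Finite.injective_iff_bijective.mp hf_inj), fun i j => ⟨?_, ?_⟩⟩
  · exact fun hij => by_contra fun hne => hij ((hf j).col_eq_zero i hne)
  · rintro rfl
    exact (hf j).ne_zero

variable [Fintype ι] [NonUnitalNonAssocSemiring R] {M : Matrix ι ι R} {σ : Equiv.Perm ι}

theorem IsMonomial.mul_apply (hM : M.IsMonomial σ) (N : Matrix ι ι R) (i j : ι) :
    (N * M) i j = N i (σ j) * M (σ j) j := by
  rw [Matrix.mul_apply]
  refine Finset.sum_eq_single _ (fun p _ hp => ?_) (by simp)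
  rw [not_ne_iff.mp (mt (hM p j).mp hp), mul_zero]

theorem IsMonomial.apply_mul (hM : M.IsMonomial σ) (N : Matrix ι ι R) (i j : ι) :
    (M * N) (σ i) j = M (σ i) i * N i j := by
  rw [Matrix.mul_apply]
  refine Finset.sum_eq_single _ (fun p _ hp => ?_) (by simp)
  rw [not_ne_iff.mp (mt (hM (σ i) p).mp (σ.injective.ne hp.symm)), zero_mul]

end Monomial

theorem exists_bruhat_decomposition {ι K : Type*} [Fintype ι] [LinearOrder ι] [DecidableEq ι]
    [Field K] (A : Matrix ι ι K) (hA : A.det ≠ 0) :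
    ∃ σ : Equiv.Perm ι, ∃ b₁ b₂ M : Matrix ι ι K, b₁.IsUpperTriangular ∧ b₂.IsUpperTriangular ∧
      b₁.det = 1 ∧ b₂.det = 1 ∧ M.IsMonomial σ ∧ A = b₁ * M * b₂ := by
  obtain ⟨u, v, hu, hv, hud, hvd, hpiv⟩ := A.exists_forall_isPivot hA
  obtain ⟨σ, hσ⟩ := exists_isMonomial_of_forall_isPivot hpiv
  have hu_unit : IsUnit u.det := by simp [hud]
  have hv_unit : IsUnit v.det := by simp [hvd]
  refine ⟨σ, u⁻¹, v⁻¹, u * A * v, hu.nonsing_inv, hv.nonsing_inv, by simp [hud], by simp [hvd],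
    hσ, ?_⟩
  rw [Matrix.mul_assoc u, nonsing_inv_mul_cancel_left _ _ hu_unit,
    mul_nonsing_inv_cancel_right _ _ hv_unit]

section Uniqueness

variable {ι R : Type*} [Fintype ι] [LinearOrder ι]

theorem IsMonomial.le_of_mul_eq_mul [Ring R] [NoZeroDivisors R] {u w M M' : Matrix ι ι R}
    {σ σ' : Equiv.Perm ι} (hM : M.IsMonomial σ) (hM' : M'.IsMonomial σ')
    (hu : u.IsUpperTriangular) (hw : ∀ a, w a a ≠ 0) (h : u * M = M' * w) (a : ι) :
    σ' a ≤ σ a := by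
  have hentry : u (σ' a) (σ a) * M (σ a) a = M' (σ' a) a * w a a := by
    rw [← hM.mul_apply, ← hM'.apply_mul, h]
  have hu_ne : u (σ' a) (σ a) ≠ 0 :=
    left_ne_zero_of_mul (hentry ▸ mul_ne_zero ((hM' _ _).mpr rfl) (hw a))
  exact not_lt.mp fun hlt => hu_ne (hu hlt)

variable [DecidableEq ι] [CommRing R] [IsDomain R]

theorem IsMonomial.le_of_mul_mul_eq {b₁ b₂ b₁' b₂' M M' : Matrix ι ι R} {σ σ' : Equiv.Perm ι}
    (hM : M.IsMonomial σ) (hM' : M'.IsMonomial σ') (hb₁ : b₁.IsUpperTriangular)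
    (hb₂ : b₂.IsUpperTriangular) (hb₁' : b₁'.IsUpperTriangular) (hb₂' : b₂'.IsUpperTriangular)
    (hb₂d : IsUnit b₂.det) (hb₁d' : IsUnit b₁'.det) (hb₂d' : IsUnit b₂'.det)
    (h : b₁ * M * b₂ = b₁' * M' * b₂') (a : ι) : σ' a ≤ σ a := by
  have hw : (b₂' * b₂⁻¹).det ≠ 0 := by
    rw [det_mul]
    exact (hb₂d'.mul (isUnit_nonsing_inv_det _ hb₂d)).ne_zero
  refine hM.le_of_mul_eq_mul hM' (hb₁'.nonsing_inv.mul hb₁)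
    (diag_ne_zero_of_isUpperTriangular (hb₂'.mul hb₂.nonsing_inv) hw) ?_ a
  calc b₁'⁻¹ * b₁ * M = b₁'⁻¹ * (b₁ * M * b₂) * b₂⁻¹ := by
        simp only [Matrix.mul_assoc, mul_nonsing_inv _ hb₂d, Matrix.mul_one]
    _ = b₁'⁻¹ * (b₁' * M' * b₂') * b₂⁻¹ := by rw [h]
    _ = M' * (b₂' * b₂⁻¹) := by
        simp only [Matrix.mul_assoc, nonsing_inv_mul_cancel_left _ _ hb₁d']

theorem IsMonomial.perm_eq_of_mul_mul_eq {b₁ b₂ b₁' b₂' M M' : Matrix ι ι R}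
    {σ σ' : Equiv.Perm ι} (hM : M.IsMonomial σ) (hM' : M'.IsMonomial σ')
    (hb₁ : b₁.IsUpperTriangular) (hb₂ : b₂.IsUpperTriangular) (hb₁' : b₁'.IsUpperTriangular)
    (hb₂' : b₂'.IsUpperTriangular) (hb₁d : IsUnit b₁.det) (hb₂d : IsUnit b₂.det)
    (hb₁d' : IsUnit b₁'.det) (hb₂d' : IsUnit b₂'.det) (h : b₁ * M * b₂ = b₁' * M' * b₂') :
    σ = σ' :=
  Equiv.ext fun a => le_antisymm
    (hM'.le_of_mul_mul_eq hM hb₁' hb₂' hb₁ hb₂ hb₂d' hb₁d hb₂d h.symm a)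
    (hM.le_of_mul_mul_eq hM' hb₁ hb₂ hb₁' hb₂' hb₂d hb₁d' hb₂d' h a)

end Uniqueness

end Matrix

theorem bruhat_decomposition_SL_general {k : Type*} [Field k] {n : ℕ}
    (A : Matrix.SpecialLinearGroup (Fin n) k) :
    ∃! σ : Equiv.Perm (Fin n),
      ∃ b₁ b₂ M : Matrix (Fin n) (Fin n) k,
        IsUpperTriangular b₁ ∧ IsUpperTriangular b₂ ∧
        b₁.det = 1 ∧ b₂.det = 1 ∧ M.det = 1 ∧
        (∀ i j : Fin n, M i j ≠ 0 ↔ i = σ j) ∧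
        (A : Matrix (Fin n) (Fin n) k) = b₁ * M * b₂ := by
  obtain ⟨σ, b₁, b₂, M, hb₁, hb₂, hb₁d, hb₂d, hM, hA⟩ :=
    Matrix.exists_bruhat_decomposition (A : Matrix (Fin n) (Fin n) k) (by simp)
  have hMd : M.det = 1 := by simpa [hA, Matrix.det_mul, hb₁d, hb₂d] using A.prop
  -- The `IsUpperTriangular` of the statement unfolds to Mathlib's `Matrix.IsUpperTriangular`.
  refine ⟨σ, ⟨b₁, b₂, M, hb₁, hb₂, hb₁d, hb₂d, hMd, hM, hA⟩, ?_⟩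
  rintro σ' ⟨b₁', b₂', M', hb₁', hb₂', hb₁d', hb₂d', -, hM', hA'⟩
  exact Matrix.IsMonomial.perm_eq_of_mul_mul_eq hM' hM hb₁' hb₂' hb₁ hb₂ (by simp [hb₁d'])
    (by simp [hb₂d']) (by simp [hb₁d]) (by simp [hb₂d]) (hA'.symm.trans hA)

/-- Gelfand–Naimark's Bruhat decomposition for `SL_n(k)`: every `A ∈ SL_n(k)` can be
written as `A = b₁ M b₂` with `b₁, b₂` upper triangular of determinant `1` and `M` a
monomial matrix of determinant `1` (nonzero entries exactly at the positions `(σ j, j)`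
for a permutation `σ`), and the permutation `σ` is uniquely determined by `A`. -/
theorem bruhat_decomposition_SL {k : Type*} [Field k] {n : ℕ} (hn : 1 ≤ n)
    (A : Matrix.SpecialLinearGroup (Fin n) k) :
    ∃! σ : Equiv.Perm (Fin n),
      ∃ b₁ b₂ M : Matrix (Fin n) (Fin n) k,
        IsUpperTriangular b₁ ∧ IsUpperTriangular b₂ ∧
        b₁.det = 1 ∧ b₂.det = 1 ∧ M.det = 1 ∧
        (∀ i j : Fin n, M i j ≠ 0 ↔ i = σ j) ∧
        (A : Matrix (Fin n) (Fin n) k) = b₁ * M * b₂ :=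
  bruhat_decomposition_SL_general A
end

section
/- Let k be a field and n ≥ 1. For any pair of complete flags (F_0 ⊂ ⋯ ⊂ F_n) and (F'_0 ⊂ ⋯ ⊂ F'_n) in k^n there exists a unique permutation σ ∈ S_n such that for all 0 ≤ i, j ≤ n one has dim(F_i ∩ F'_j) = #{a : 1 ≤ a ≤ i and σ(a) ≤ j}. (Relative position of two complete flags.) -/
/-- A complete flag in `k^n`: a chain `0 = F 0 ⊆ F 1 ⊆ ⋯ ⊆ F n = k^n` of linear
subspaces with `dim (F i) = i` for all `i`. -/
def IsCompleteFlag {k : Type*} [Field k] {n : ℕ}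
    (F : Fin (n + 1) → Submodule k (Fin n → k)) : Prop :=
  Monotone F ∧ F 0 = ⊥ ∧ F (Fin.last n) = ⊤ ∧
    ∀ i : Fin (n + 1), Module.finrank k (F i) = (i : ℕ)

/-!
Put `d i j = dim (F i ⊓ F' j)`. Going from `F a` to `F (a + 1)` raises `d · j` by `0` or `1`,
and by the modular law for dimensions this increment is monotone in `j`; it vanishes at
`j = 0` and equals `1` at `j = n`, so it is `[σ a < j]` for a unique threshold `σ a`.
Summing the increments gives `d i j = #{a < i | σ a < j}`; the values `d n j = j` force `σ`
to be onto, and the increments read `σ` back off the counts, which gives uniqueness.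
-/

open Module Finset

section Modular

variable {k V : Type*} [DivisionRing k] [AddCommGroup V] [Module k V] [FiniteDimensional k V]

theorem Submodule.finrank_inf_add_finrank_inf_le {A A' B B' : Submodule k V}
    (hA : A ≤ A') (hB : B ≤ B') :
    finrank k ↥(A' ⊓ B) + finrank k ↥(A ⊓ B') ≤ finrank k ↥(A' ⊓ B') + finrank k ↥(A ⊓ B) := by
  have hinf : (A' ⊓ B) ⊓ (A ⊓ B') = A ⊓ B :=
    le_antisymm (le_inf (inf_le_right.trans inf_le_left) (inf_le_left.trans inf_le_right))
      (le_inf (inf_le_inf_right _ hA) (inf_le_inf_left _ hB))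
  have hsup : finrank k ↥((A' ⊓ B) ⊔ (A ⊓ B')) ≤ finrank k ↥(A' ⊓ B') :=
    Submodule.finrank_mono (sup_le (inf_le_inf_left _ hB) (inf_le_inf_right _ hA))
  have := Submodule.finrank_sup_add_finrank_inf_eq (A' ⊓ B) (A ⊓ B')
  rw [hinf] at this
  omega

theorem Submodule.finrank_inf_add_finrank_le {A A' : Submodule k V} (hA : A ≤ A')
    (B : Submodule k V) :
    finrank k ↥(A' ⊓ B) + finrank k A ≤ finrank k A' + finrank k ↥(A ⊓ B) := by
  have := Submodule.finrank_inf_add_finrank_inf_le hA (le_top : B ≤ ⊤)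
  rwa [inf_top_eq, inf_top_eq] at this

end Modular

theorem Fin.exists_castSucc_lt_iff_of_monotone {n : ℕ} {P : Fin (n + 1) → Prop}
    (hP : Monotone P) (h0 : ¬P 0) (hlast : P (Fin.last n)) :
    ∃ t : Fin n, ∀ j, P j ↔ t.castSucc < j := by
  classical
  let m := (univ.filter P).min' ⟨Fin.last n, by simpa using hlast⟩
  have hm : ∀ j, P j ↔ m ≤ j := fun j =>
    ⟨fun h => min'_le _ _ (by simpa using h),
      fun h => hP h (by simpa using min'_mem (univ.filter P) _)⟩
  obtain ⟨t, ht⟩ := Fin.exists_succ_eq.mpr fun h0' : m = 0 => h0 ((hm 0).mpr h0'.le)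
  exact ⟨t, fun j => (hm j).trans (ht ▸ Fin.castSucc_lt_iff_succ_le.symm)⟩

/-- The rank of the upper left `i × j` corner of the permutation matrix of `f`. -/
def rankFunction {n : ℕ} (f : Fin n → Fin n) (i j : ℕ) : ℕ :=
  #{a : Fin n | (a : ℕ) < i ∧ (f a : ℕ) < j}

section RankFunction

variable {n : ℕ}

theorem rankFunction_zero_left (f : Fin n → Fin n) (j : ℕ) : rankFunction f 0 j = 0 := by
  simp [rankFunction]

theorem rankFunction_succ_left (f : Fin n → Fin n) (a : Fin n) (j : ℕ) :
    rankFunction f (a + 1) j = rankFunction f a j + if (f a : ℕ) < j then 1 else 0 := by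
  have hsplit : univ.filter (fun b : Fin n => (b : ℕ) < a + 1 ∧ (f b : ℕ) < j) =
      univ.filter (fun b : Fin n => (b : ℕ) < a ∧ (f b : ℕ) < j) ∪
        univ.filter (fun b : Fin n => b = a ∧ (f b : ℕ) < j) := by
    ext b
    simp only [mem_filter, mem_union, mem_univ, true_and, Fin.ext_iff]
    omega
  have hdisj : Disjoint (univ.filter fun b : Fin n => (b : ℕ) < a ∧ (f b : ℕ) < j)
      (univ.filter fun b : Fin n => b = a ∧ (f b : ℕ) < j) :=
    disjoint_filter.mpr fun b _ hb hb' => (hb'.1 ▸ hb.1 : (a : ℕ) < a).false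
  rw [rankFunction, hsplit, card_union_of_disjoint hdisj]
  congr 1
  split_ifs with h
  · refine card_eq_one.mpr ⟨a, ?_⟩
    ext b
    simp only [mem_filter, mem_univ, true_and, mem_singleton]
    exact ⟨And.left, fun hb => ⟨hb, hb ▸ h⟩⟩
  · exact card_eq_zero.mpr (filter_eq_empty_iff.mpr fun b _ hb => h (hb.1 ▸ hb.2))

theorem eq_of_rankFunction_eq {f g : Fin n → Fin n}
    (h : ∀ i j : Fin (n + 1), rankFunction f i j = rankFunction g i j) : f = g := by
  funext a
  have hstep : ∀ j : Fin (n + 1), (f a : ℕ) < j ↔ (g a : ℕ) < j := by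
    intro j
    have := h a.succ j
    rw [Fin.val_succ, rankFunction_succ_left, rankFunction_succ_left,
      ← Fin.val_castSucc, h a.castSucc j] at this
    split_ifs at this <;> constructor <;> intro <;> omega
  have hfg := (hstep (f a).succ).mp (by simp)
  have hgf := (hstep (g a).succ).mpr (by simp)
  simp only [Fin.val_succ] at hfg hgf
  exact Fin.ext (by omega)

theorem surjective_of_rankFunction_last {f : Fin n → Fin n}
    (h : ∀ j : Fin (n + 1), rankFunction f n j = j) : Function.Surjective f := by
  intro t
  have hlt : rankFunction f n t.castSucc < rankFunction f n t.succ := by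
    rw [h, h, Fin.val_castSucc, Fin.val_succ]
    omega
  obtain ⟨a, ha, ha'⟩ := exists_mem_notMem_of_card_lt_card hlt
  simp only [mem_filter, mem_univ, true_and, Fin.val_castSucc, Fin.val_succ] at ha ha'
  exact ⟨a, Fin.ext (by omega)⟩

end RankFunction

namespace IsCompleteFlag

variable {k : Type*} [Field k] {n : ℕ} {F F' : Fin (n + 1) → Submodule k (Fin n → k)}

theorem exists_finrank_inf_succ_eq (hF : IsCompleteFlag F) (hF' : IsCompleteFlag F')
    (a : Fin n) :
    ∃ t : Fin n, ∀ j, finrank k ↥(F a.succ ⊓ F' j) =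
      finrank k ↥(F a.castSucc ⊓ F' j) + if (t : ℕ) < j then 1 else 0 := by
  obtain ⟨hmono, -, -, hrank⟩ := hF
  obtain ⟨hmono', hbot', htop', -⟩ := hF'
  have hle : F a.castSucc ≤ F a.succ := hmono (Fin.castSucc_le_succ a)
  have hjump :
      Monotone fun j => finrank k ↥(F a.castSucc ⊓ F' j) < finrank k ↥(F a.succ ⊓ F' j) :=
    fun j j' hj hlt => by
      have := Submodule.finrank_inf_add_finrank_inf_le hle (hmono' hj)
      omega
  have hzero : ¬finrank k ↥(F a.castSucc ⊓ F' 0) < finrank k ↥(F a.succ ⊓ F' 0) := by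
    rw [hbot', inf_bot_eq, inf_bot_eq]
    exact lt_irrefl _
  have hlast : finrank k ↥(F a.castSucc ⊓ F' (Fin.last n)) <
      finrank k ↥(F a.succ ⊓ F' (Fin.last n)) := by
    rw [htop', inf_top_eq, inf_top_eq, hrank, hrank, Fin.val_castSucc, Fin.val_succ]
    exact Nat.lt_succ_self _
  obtain ⟨t, ht⟩ := Fin.exists_castSucc_lt_iff_of_monotone hjump hzero hlast
  refine ⟨t, fun j => ?_⟩
  have hlower := Submodule.finrank_mono (inf_le_inf_right (F' j) hle)
  have hupper := Submodule.finrank_inf_add_finrank_le hle (F' j)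
  rw [hrank, hrank, Fin.val_castSucc, Fin.val_succ] at hupper
  have := ht j
  rw [Fin.lt_def, Fin.val_castSucc] at this
  split_ifs <;> omega

theorem exists_finrank_inf_eq_rankFunction (hF : IsCompleteFlag F) (hF' : IsCompleteFlag F') :
    ∃ f : Fin n → Fin n, ∀ i j : Fin (n + 1), finrank k ↥(F i ⊓ F' j) = rankFunction f i j := by
  choose f hf using exists_finrank_inf_succ_eq hF hF'
  refine ⟨f, fun i j => ?_⟩
  induction i using Fin.induction with
  | zero => simp [hF.2.1, rankFunction_zero_left]
  | succ a ih => rw [hf, ih, Fin.val_castSucc, Fin.val_succ, rankFunction_succ_left]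

end IsCompleteFlag

theorem relative_position_of_flags_general {k : Type*} [Field k] {n : ℕ}
    (F F' : Fin (n + 1) → Submodule k (Fin n → k))
    (hF : IsCompleteFlag F) (hF' : IsCompleteFlag F') :
    ∃! σ : Equiv.Perm (Fin n),
      ∀ i j : Fin (n + 1),
        Module.finrank k ↥(F i ⊓ F' j) =
          (Finset.univ.filter fun a : Fin n =>
            (a : ℕ) < (i : ℕ) ∧ (σ a : ℕ) < (j : ℕ)).card := by
  obtain ⟨f, hf⟩ := hF.exists_finrank_inf_eq_rankFunction hF'
  have hsurj : Function.Surjective f := surjective_of_rankFunction_last fun j => by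
    have := hf (Fin.last n) j
    rwa [hF.2.2.1, top_inf_eq, hF'.2.2.2, Fin.val_last, eq_comm] at this
  refine ⟨Equiv.ofBijective f hsurj.bijective_of_finite, hf, fun τ hτ => ?_⟩
  exact Equiv.coe_fn_injective (eq_of_rankFunction_eq fun i j => (hτ i j).symm.trans (hf i j))

/-- Relative position of two complete flags: for any pair of complete flags `F, F'` in
`k^n` there is a unique permutation `σ ∈ S_n` with
`dim (F i ∩ F' j) = #{a | a < i and σ a < j}` (with `0`-based indexing of `S_n`,
corresponding to `#{a | 1 ≤ a ≤ i, σ(a) ≤ j}` with `1`-based indexing) for all `i, j`. -/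
theorem relative_position_of_flags {k : Type*} [Field k] {n : ℕ} (hn : 1 ≤ n)
    (F F' : Fin (n + 1) → Submodule k (Fin n → k))
    (hF : IsCompleteFlag F) (hF' : IsCompleteFlag F') :
    ∃! σ : Equiv.Perm (Fin n),
      ∀ i j : Fin (n + 1),
        Module.finrank k ↥(F i ⊓ F' j) =
          (Finset.univ.filter fun a : Fin n =>
            (a : ℕ) < (i : ℕ) ∧ (σ a : ℕ) < (j : ℕ)).card :=
  relative_position_of_flags_general F F' hF hF'
end

section
/- Let k be a field and n ≥ 1. Let E denote the standard complete flag in k^n, with E_i spanned by the first i standard basis vectors, and let B ≤ GL_n(k) be the stabilizer of E (the invertible upper triangular matrices). Two complete flags F and F' in k^n lie in the same B-orbit if and only if dim(E_i ∩ F_j) = dim(E_i ∩ F'_j) for all 0 ≤ i, j ≤ n; consequently the B-orbits on the set of complete flags in k^n are in bijection with S_n. (Ehresmann's cell decomposition of the full flag manifold, reformulated via the Bruhat decomposition.) -/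
/-- The `i`-th member `E_i` of the standard complete flag of `k^n`: the span of the
first `i` standard basis vectors, i.e. the vectors vanishing in coordinates `≥ i`. -/
def stdFlag (k : Type*) [Field k] (n : ℕ) (i : Fin (n + 1)) : Submodule k (Fin n → k) where
  carrier := {v | ∀ a : Fin n, (i : ℕ) ≤ (a : ℕ) → v a = 0}
  add_mem' := fun hu hv a ha => by simp [hu a ha, hv a ha]
  zero_mem' := fun a _ => rfl
  smul_mem' := fun c v hv a ha => by simp [hv a ha]

/-- Two complete flags lie in the same orbit of `B`, the stabilizer of the standard
flag (the invertible upper triangular matrices). -/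
def SameBOrbit {k : Type*} [Field k] {n : ℕ}
    (F F' : Fin (n + 1) → Submodule k (Fin n → k)) : Prop :=
  ∃ g : GL (Fin n) k, IsUpperTriangular (g : Matrix (Fin n) (Fin n) k) ∧
    ∀ j : Fin (n + 1),
      (F j).map (Matrix.mulVecLin (g : Matrix (Fin n) (Fin n) k)) = F' j

/-- The type of complete flags in `k^n`. -/
def CompleteFlag (k : Type*) [Field k] (n : ℕ) : Type _ :=
  {F : Fin (n + 1) → Submodule k (Fin n → k) // IsCompleteFlag F}

/-! Every complete flag `F` lies in the `B`-orbit of a coordinate flag `C_w`, whose `j`-th member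
is spanned by `e (w 0), …, e (w (j-1))`. To find `w`, pick in each `F (j+1) \ F j` a vector `u j`
whose last nonzero coordinate `w j` is as small as possible. Gaussian elimination shows that
these pivots are distinct, and the matrix with column `w j` equal to `u j` is upper triangular
with nonzero diagonal and maps `C_w` onto `F`. Since `B` fixes every `E i`, the numbers
`dim (E i ⊓ F j)` are constant on orbits. For `C_w` they count the `l < j` with `w l < i`, and
these counts determine `w`. -/
section CoordSubspace

variable (k : Type*) [Field k] {ι : Type*}

def coordSubspace (s : Set ι) : Submodule k (ι → k) where
  carrier := {v | ∀ a ∉ s, v a = 0}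
  add_mem' hu hv a ha := by simp [hu a ha, hv a ha]
  zero_mem' _ _ := rfl
  smul_mem' c _ hv a ha := by simp [hv a ha]

variable {k}

lemma mem_coordSubspace {s : Set ι} {v : ι → k} :
    v ∈ coordSubspace k s ↔ ∀ a ∉ s, v a = 0 :=
  Iff.rfl

lemma coordSubspace_mono : Monotone (coordSubspace k : Set ι → Submodule k (ι → k)) :=
  fun _ _ hst _ hv a ha => hv a (fun h => ha (hst h))

lemma coordSubspace_empty : coordSubspace k (∅ : Set ι) = ⊥ :=
  eq_bot_iff.2 fun _ hv => funext fun a => hv a (Set.notMem_empty a)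

lemma coordSubspace_univ : coordSubspace k (Set.univ : Set ι) = ⊤ :=
  eq_top_iff.2 fun _ _ a ha => absurd (Set.mem_univ a) ha

lemma coordSubspace_inf (s t : Set ι) :
    coordSubspace k s ⊓ coordSubspace k t = coordSubspace k (s ∩ t) := by
  refine le_antisymm (fun v ⟨hs, ht⟩ a ha => ?_) (le_inf_iff.2
    ⟨coordSubspace_mono Set.inter_subset_left, coordSubspace_mono Set.inter_subset_right⟩)
  by_cases has : a ∈ s
  · exact ht a fun hat => ha ⟨has, hat⟩
  · exact hs a has

lemma coordSubspace_eq_span [Finite ι] (s : Set ι) :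
    coordSubspace k s = Submodule.span k (Pi.basisFun k ι '' s) := by
  ext v
  rw [(Pi.basisFun k ι).mem_span_image, mem_coordSubspace]
  simp only [Set.subset_def, Finset.mem_coe, Finsupp.mem_support_iff, Pi.basisFun_repr]
  exact forall_congr' fun a => not_imp_comm

lemma finrank_coordSubspace [Finite ι] (s : Set ι) :
    Module.finrank k (coordSubspace k s) = s.ncard := by
  classical
  have hli : LinearIndependent k (fun a : s => Pi.basisFun k ι a) :=
    (Pi.basisFun k ι).linearIndependent.comp _ Subtype.val_injective
  have := Fintype.ofFinite ι
  rw [coordSubspace_eq_span, Set.image_eq_range, finrank_span_eq_card hli,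
    ← Nat.card_eq_fintype_card, Nat.card_coe_set_eq]

end CoordSubspace

section PermFlag

variable {k : Type*} [Field k] {n : ℕ}

lemma stdFlag_eq_coordSubspace (i : Fin (n + 1)) :
    stdFlag k n i = coordSubspace k {a : Fin n | (a : ℕ) < i} := by
  ext v
  simp only [mem_coordSubspace, Set.mem_ofPred_eq, not_lt]
  rfl

variable (k) in
def coordFlag (w : Equiv.Perm (Fin n)) (j : Fin (n + 1)) : Submodule k (Fin n → k) :=
  coordSubspace k (w '' {l | (l : ℕ) < j})

noncomputable def permRank (w : Equiv.Perm (Fin n)) (i j : ℕ) : ℕ :=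
  {l : Fin n | (l : ℕ) < j ∧ (w l : ℕ) < i}.ncard

lemma finrank_stdFlag_inf_coordFlag (w : Equiv.Perm (Fin n)) (i j : Fin (n + 1)) :
    Module.finrank k ↥(stdFlag k n i ⊓ coordFlag k w j) = permRank w i j := by
  rw [stdFlag_eq_coordSubspace, coordFlag, coordSubspace_inf, finrank_coordSubspace,
    Set.inter_comm, ← Set.image_inter_preimage, Set.ncard_image_of_injective _ w.injective]
  rfl

lemma isCompleteFlag_coordFlag (w : Equiv.Perm (Fin n)) : IsCompleteFlag (coordFlag k w) := by
  refine ⟨fun j j' hjj' => coordSubspace_mono (Set.image_mono fun l (hl : (l : ℕ) < j) =>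
    lt_of_lt_of_le hl hjj'), ?_, ?_, fun j => ?_⟩
  · simp [coordFlag, coordSubspace_empty]
  · simp [coordFlag, coordSubspace_univ]
  · rw [coordFlag, finrank_coordSubspace, Set.ncard_image_of_injective _ w.injective,
      Set.ncard_eq_toFinset_card', Set.toFinset_ofPred, Fin.card_filter_val_lt]
    omega

lemma permRank_succ (w : Equiv.Perm (Fin n)) (i : ℕ) (l : Fin n) :
    permRank w i (l + 1) = permRank w i l + if (w l : ℕ) < i then 1 else 0 := by
  unfold permRank
  split_ifs with h
  · rw [← Set.ncard_insert_of_notMem fun hl => lt_irrefl _ hl.1]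
    congr 1
    ext l'
    simp only [Set.mem_ofPred_eq, Set.mem_insert_iff, Fin.ext_iff]
    rcases eq_or_ne l' l with rfl | hne
    · simp [h]
    · have := Fin.val_ne_of_ne hne
      omega
  · congr 1
    ext l'
    simp only [Set.mem_ofPred_eq]
    rcases eq_or_ne l' l with rfl | hne
    · simp [h]
    · have := Fin.val_ne_of_ne hne
      omega

lemma permRank_injective {w w' : Equiv.Perm (Fin n)}
    (h : ∀ i j : Fin (n + 1), permRank w i j = permRank w' i j) : w = w' := by
  have hlt_iff (l : Fin n) (i : Fin (n + 1)) : (w l : ℕ) < i ↔ (w' l : ℕ) < i := by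
    have hsucc := h i l.succ
    have hcast := h i l.castSucc
    rw [Fin.val_succ, permRank_succ, permRank_succ] at hsucc
    rw [Fin.val_castSucc] at hcast
    have : (if (w l : ℕ) < i then 1 else 0) = if (w' l : ℕ) < i then 1 else 0 := by omega
    split_ifs at this <;> tauto
  ext l
  have h₁ := hlt_iff l (w l).succ
  have h₂ := hlt_iff l (w' l).succ
  simp only [Fin.val_succ] at h₁ h₂
  omega

end PermFlag

section UpperTriangular

variable {k : Type*} [Field k] {n : ℕ}

lemma isUpperTriangular_iff (A : Matrix (Fin n) (Fin n) k) :
    IsUpperTriangular A ↔ A.IsUpperTriangular :=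
  Iff.rfl

lemma mulVecLin_injective {ι : Type*} [Fintype ι] [DecidableEq ι] (g : GL ι k) :
    Function.Injective (g : Matrix ι ι k).mulVecLin :=
  Matrix.mulVec_injective_iff_isUnit.2 g.isUnit

lemma finrank_map_mulVecLin {ι : Type*} [Fintype ι] [DecidableEq ι] (g : GL ι k)
    (V : Submodule k (ι → k)) :
    Module.finrank k ↥(V.map (g : Matrix ι ι k).mulVecLin) = Module.finrank k V :=
  ((Submodule.equivMapOfInjective _ (mulVecLin_injective g) V).finrank_eq).symm

lemma map_stdFlag {g : GL (Fin n) k} (hg : IsUpperTriangular (g : Matrix (Fin n) (Fin n) k))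
    (i : Fin (n + 1)) :
    (stdFlag k n i).map (g : Matrix (Fin n) (Fin n) k).mulVecLin = stdFlag k n i := by
  refine Submodule.eq_of_le_of_finrank_eq ?_ (finrank_map_mulVecLin g _)
  rintro _ ⟨v, hv, rfl⟩ a ha
  change ∑ b, (g : Matrix (Fin n) (Fin n) k) a b * v b = 0
  refine Finset.sum_eq_zero fun b _ => ?_
  by_cases hb : (i : ℕ) ≤ b
  · rw [hv b hb, mul_zero]
  · rw [hg a b (by omega), zero_mul]

lemma finrank_stdFlag_inf_map {g : GL (Fin n) k}
    (hg : IsUpperTriangular (g : Matrix (Fin n) (Fin n) k)) (i : Fin (n + 1))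
    (V : Submodule k (Fin n → k)) :
    Module.finrank k ↥(stdFlag k n i ⊓ V.map (g : Matrix (Fin n) (Fin n) k).mulVecLin) =
      Module.finrank k ↥(stdFlag k n i ⊓ V) := by
  have := finrank_map_mulVecLin g (stdFlag k n i ⊓ V)
  rwa [Submodule.map_inf _ (mulVecLin_injective g), map_stdFlag hg i] at this

variable {F F' F'' : Fin (n + 1) → Submodule k (Fin n → k)}

lemma SameBOrbit.finrank_stdFlag_inf_eq (h : SameBOrbit F F') (i j : Fin (n + 1)) :
    Module.finrank k ↥(stdFlag k n i ⊓ F j) = Module.finrank k ↥(stdFlag k n i ⊓ F' j) := by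
  obtain ⟨g, hg, hmap⟩ := h
  rw [← hmap j, finrank_stdFlag_inf_map hg]

lemma SameBOrbit.symm (h : SameBOrbit F F') : SameBOrbit F' F := by
  obtain ⟨g, hg, hmap⟩ := h
  refine ⟨g⁻¹, ?_, fun j => ?_⟩
  · have := g.invertible
    rw [isUpperTriangular_iff, Matrix.coe_units_inv]
    exact Matrix.blockTriangular_inv_of_blockTriangular hg
  · rw [← hmap j, ← Submodule.map_comp, ← Matrix.mulVecLin_mul, Units.inv_mul,
      Matrix.mulVecLin_one, Submodule.map_id]

lemma SameBOrbit.trans (h : SameBOrbit F F') (h' : SameBOrbit F' F'') : SameBOrbit F F'' := by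
  obtain ⟨g, hg, hmap⟩ := h
  obtain ⟨g', hg', hmap'⟩ := h'
  refine ⟨g' * g, ?_, fun j => ?_⟩
  · rw [isUpperTriangular_iff, Units.val_mul]
    exact Matrix.BlockTriangular.mul hg' hg
  · rw [Units.val_mul, Matrix.mulVecLin_mul, Submodule.map_comp, hmap j, hmap' j]

end UpperTriangular

section Pivot

variable {k : Type*} [Field k] {n : ℕ}

lemma stdFlag_eq_coordFlag_one : stdFlag k n = coordFlag k 1 := by
  ext1 i
  rw [stdFlag_eq_coordSubspace, coordFlag, Equiv.Perm.coe_one, Set.image_id]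

lemma isCompleteFlag_stdFlag : IsCompleteFlag (stdFlag k n) :=
  stdFlag_eq_coordFlag_one (k := k) ▸ isCompleteFlag_coordFlag 1

lemma mem_stdFlag_castSucc {a : Fin n} {v : Fin n → k} (hv : v ∈ stdFlag k n a.succ)
    (hva : v a = 0) : v ∈ stdFlag k n a.castSucc := by
  intro b hb
  rcases (show (a : ℕ) ≤ b from hb).eq_or_lt with h | h
  · rwa [← Fin.ext h]
  · exact hv b h

lemma sub_smul_mem_stdFlag_castSucc {a : Fin n} {x y : Fin n → k}
    (hx : x ∈ stdFlag k n a.succ) (hy : y ∈ stdFlag k n a.succ) (hya : y a ≠ 0) :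
    x - (x a / y a) • y ∈ stdFlag k n a.castSucc :=
  mem_stdFlag_castSucc (sub_mem hx (Submodule.smul_mem _ _ hy)) (by simp [div_mul_cancel₀ _ hya])

lemma exists_pivot {U V : Submodule k (Fin n → k)} (hVU : ¬ V ≤ U) :
    ∃ a : Fin n, ∃ u ∈ V, u ∉ U ∧ u ∈ stdFlag k n a.succ ∧ u a ≠ 0 ∧
      V ⊓ stdFlag k n a.castSucc ≤ U := by
  obtain ⟨-, hE0, hElast, -⟩ := isCompleteFlag_stdFlag (k := k) (n := n)
  obtain ⟨i, hi, hmin⟩ := wellFounded_lt.has_min {i | ¬ V ⊓ stdFlag k n i ≤ U}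
    ⟨Fin.last n, by simpa [hElast] using hVU⟩
  have hi0 : i ≠ 0 := by
    rintro rfl
    simp [hE0] at hi
  obtain ⟨a, rfl⟩ := Fin.exists_succ_eq.2 hi0
  have hprev : V ⊓ stdFlag k n a.castSucc ≤ U := not_not.1 (hmin _ · Fin.castSucc_lt_succ)
  obtain ⟨u, ⟨huV, huE⟩, huU⟩ := SetLike.not_le_iff_exists.1 hi
  refine ⟨a, u, huV, huU, huE, fun hua => huU (hprev ⟨huV, ?_⟩), hprev⟩
  exact mem_stdFlag_castSucc huE hua

variable {F : Fin (n + 1) → Submodule k (Fin n → k)}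

lemma IsCompleteFlag.not_succ_le_castSucc (hF : IsCompleteFlag F) (j : Fin n) :
    ¬ F j.succ ≤ F j.castSucc := fun hle => by
  have := Submodule.finrank_mono hle
  rw [hF.2.2.2, hF.2.2.2, Fin.val_succ, Fin.val_castSucc] at this
  omega

lemma IsCompleteFlag.exists_pivots (hF : IsCompleteFlag F) :
    ∃ (w : Equiv.Perm (Fin n)) (u : Fin n → Fin n → k), ∀ l,
      u l ∈ F l.succ ∧ u l ∈ stdFlag k n (w l).succ ∧ u l (w l) ≠ 0 := by
  choose a u huF huU huE hua hprev using
    fun j => exists_pivot (hF.not_succ_le_castSucc j)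
  have ha : Function.Injective a := by
    intro j₁ j₂ h
    by_contra hne
    wlog hlt : j₁ < j₂ generalizing j₁ j₂
    · exact this h.symm (Ne.symm hne) ((Ne.symm hne).lt_of_le (not_lt.1 hlt))
    have hu₁ : u j₁ ∈ F j₂.castSucc := hF.1 (Fin.succ_le_castSucc_iff.2 hlt) (huF j₁)
    -- clearing the pivot of `u j₂` with `u j₁` lands in `F (j₂ + 1) ⊓ E (a j₂) ≤ F j₂`
    have hx : u j₂ - (u j₂ (a j₂) / u j₁ (a j₂)) • u j₁ ∈ F j₂.castSucc := by
      refine hprev j₂ ⟨sub_mem (huF j₂) (Submodule.smul_mem _ _ ?_), ?_⟩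
      · exact hF.1 (Fin.castSucc_le_succ j₂) hu₁
      · exact sub_smul_mem_stdFlag_castSucc (huE j₂) (h ▸ huE j₁) (h ▸ hua j₁)
    have := add_mem hx (Submodule.smul_mem _ (u j₂ (a j₂) / u j₁ (a j₂)) hu₁)
    rw [sub_add_cancel] at this
    exact huU j₂ this
  exact ⟨Equiv.ofBijective a (Finite.injective_iff_bijective.1 ha), u,
    fun l => ⟨huF l, huE l, hua l⟩⟩

end Pivot

section Orbits

variable {k : Type*} [Field k] {n : ℕ} {F F' : Fin (n + 1) → Submodule k (Fin n → k)}

lemma sameBOrbit_coordFlag_of_pivots (hF : IsCompleteFlag F) {w : Equiv.Perm (Fin n)}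
    {u : Fin n → Fin n → k}
    (hu : ∀ l, u l ∈ F l.succ ∧ u l ∈ stdFlag k n (w l).succ ∧ u l (w l) ≠ 0) :
    SameBOrbit (coordFlag k w) F := by
  let M : Matrix (Fin n) (Fin n) k := Matrix.of fun p c => u (w.symm c) p
  have hM : IsUpperTriangular M := fun p c hcp =>
    (hu (w.symm c)).2.1 p (by simpa [Fin.val_succ] using hcp)
  have hdet : M.det ≠ 0 := by
    rw [Matrix.det_of_isUpperTriangular hM]
    exact Finset.prod_ne_zero_iff.2 fun c _ => by simpa [M] using (hu (w.symm c)).2.2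
  have hcol (l : Fin n) : M.mulVecLin (Pi.basisFun k (Fin n) (w l)) = u l := by
    ext p
    simp [M]
  refine ⟨Matrix.GeneralLinearGroup.mkOfDetNeZero M hdet, hM, fun j => ?_⟩
  refine Submodule.eq_of_le_of_finrank_eq ?_ ?_
  · rw [coordFlag, coordSubspace_eq_span, Submodule.map_span_le]
    rintro _ ⟨_, ⟨l, hl, rfl⟩, rfl⟩
    exact hcol l ▸ hF.1 (show l.succ ≤ j from hl) (hu l).1
  · rw [finrank_map_mulVecLin, (isCompleteFlag_coordFlag w).2.2.2, hF.2.2.2]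

lemma IsCompleteFlag.exists_sameBOrbit_coordFlag (hF : IsCompleteFlag F) :
    ∃ w, SameBOrbit (coordFlag k w) F :=
  let ⟨w, _, hu⟩ := hF.exists_pivots
  ⟨w, sameBOrbit_coordFlag_of_pivots hF hu⟩

lemma eq_of_finrank_stdFlag_inf_coordFlag_eq {w w' : Equiv.Perm (Fin n)}
    (h : ∀ i j : Fin (n + 1), Module.finrank k ↥(stdFlag k n i ⊓ coordFlag k w j) =
      Module.finrank k ↥(stdFlag k n i ⊓ coordFlag k w' j)) : w = w' :=
  permRank_injective fun i j => by simpa only [finrank_stdFlag_inf_coordFlag] using h i j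

lemma eq_of_sameBOrbit_coordFlag {w w' : Equiv.Perm (Fin n)}
    (h : SameBOrbit (coordFlag k w) (coordFlag k w')) : w = w' :=
  eq_of_finrank_stdFlag_inf_coordFlag_eq h.finrank_stdFlag_inf_eq

lemma sameBOrbit_iff_finrank_eq (hF : IsCompleteFlag F) (hF' : IsCompleteFlag F') :
    SameBOrbit F F' ↔ ∀ i j : Fin (n + 1),
      Module.finrank k ↥(stdFlag k n i ⊓ F j) =
        Module.finrank k ↥(stdFlag k n i ⊓ F' j) := by
  refine ⟨SameBOrbit.finrank_stdFlag_inf_eq, fun h => ?_⟩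
  obtain ⟨w, hw⟩ := hF.exists_sameBOrbit_coordFlag
  obtain ⟨w', hw'⟩ := hF'.exists_sameBOrbit_coordFlag
  obtain rfl : w = w' := eq_of_finrank_stdFlag_inf_coordFlag_eq fun i j => by
    rw [hw.finrank_stdFlag_inf_eq, h, hw'.finrank_stdFlag_inf_eq]
  exact hw.symm.trans hw'

end Orbits

lemma Nat.card_setOf_classes_of_surjective {α β : Type*} {r : α → α → Prop} {f : α → β}
    (hf : Function.Surjective f) (hr : ∀ a b, f a = f b ↔ r a b) :
    Nat.card {S : Set α | ∃ a, S = {b | r a b}} = Nat.card β := by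
  have hfib (a : α) : {b | r a b} = f ⁻¹' {f a} := Set.ext fun b => (hr a b).symm.trans eq_comm
  have hclasses : {S : Set α | ∃ a, S = {b | r a b}} = Set.range fun y => f ⁻¹' {y} := by
    ext S
    constructor
    · rintro ⟨a, rfl⟩
      exact ⟨f a, (hfib a).symm⟩
    · rintro ⟨y, rfl⟩
      obtain ⟨a, rfl⟩ := hf y
      exact ⟨a, (hfib a).symm⟩
  have hinj : Function.Injective fun y => f ⁻¹' {y} :=
    (Set.preimage_injective.2 hf).comp Set.singleton_injective
  rw [hclasses, Nat.card_range_of_injective hinj]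

theorem ehresmann_cells_of_flag_manifold_general {k : Type*} [Field k] {n : ℕ} :
    (∀ F F' : Fin (n + 1) → Submodule k (Fin n → k),
      IsCompleteFlag F → IsCompleteFlag F' →
      (SameBOrbit F F' ↔
        ∀ i j : Fin (n + 1),
          Module.finrank k ↥(stdFlag k n i ⊓ F j) =
            Module.finrank k ↥(stdFlag k n i ⊓ F' j))) ∧
    (∃ φ : CompleteFlag k n → Equiv.Perm (Fin n),
      Function.Surjective φ ∧
      ∀ F F' : CompleteFlag k n, φ F = φ F' ↔ SameBOrbit F.1 F'.1) ∧
    Nat.card {S : Set (CompleteFlag k n) |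
      ∃ F : CompleteFlag k n, S = {F' | SameBOrbit F.1 F'.1}} = Nat.factorial n := by
  choose φ hφ using fun F : CompleteFlag k n => F.2.exists_sameBOrbit_coordFlag
  have hφ_iff (F F' : CompleteFlag k n) : φ F = φ F' ↔ SameBOrbit F.1 F'.1 :=
    ⟨fun h => (hφ F).symm.trans (h ▸ hφ F'),
      fun h => eq_of_sameBOrbit_coordFlag ((hφ F).trans (h.trans (hφ F').symm))⟩
  have hφ_surj : Function.Surjective φ := fun w =>
    ⟨⟨coordFlag k w, isCompleteFlag_coordFlag w⟩, eq_of_sameBOrbit_coordFlag (hφ _)⟩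
  refine ⟨fun F F' hF hF' => sameBOrbit_iff_finrank_eq hF hF', ⟨φ, hφ_surj, hφ_iff⟩, ?_⟩
  rw [Nat.card_setOf_classes_of_surjective hφ_surj hφ_iff, Nat.card_perm, Nat.card_fin]

/-- Ehresmann's cell decomposition of the full flag manifold via the Bruhat
decomposition: two complete flags `F, F'` are in the same `B`-orbit iff
`dim (E_i ∩ F_j) = dim (E_i ∩ F'_j)` for all `i, j`, where `E` is the standard flag;
consequently the `B`-orbits on complete flags are in bijection with `S_n`. -/
theorem ehresmann_cells_of_flag_manifold {k : Type*} [Field k] {n : ℕ} (hn : 1 ≤ n) :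
    (∀ F F' : Fin (n + 1) → Submodule k (Fin n → k),
      IsCompleteFlag F → IsCompleteFlag F' →
      (SameBOrbit F F' ↔
        ∀ i j : Fin (n + 1),
          Module.finrank k ↥(stdFlag k n i ⊓ F j) =
            Module.finrank k ↥(stdFlag k n i ⊓ F' j))) ∧
    (∃ φ : CompleteFlag k n → Equiv.Perm (Fin n),
      Function.Surjective φ ∧
      ∀ F F' : CompleteFlag k n, φ F = φ F' ↔ SameBOrbit F.1 F'.1) ∧
    Nat.card {S : Set (CompleteFlag k n) |
      ∃ F : CompleteFlag k n, S = {F' | SameBOrbit F.1 F'.1}} = Nat.factorial n :=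
  ehresmann_cells_of_flag_manifold_general
end

section
/- Let q be a prime power, F_q the field with q elements, and n ≥ 1. Then the order of GL_n(F_q) equals (q-1)^n · q^{n(n-1)/2} · Σ_{σ ∈ S_n} q^{inv(σ)}, where inv(σ) is the number of inversions of σ. (Chevalley's computation of the order of the group via the Bruhat decomposition.) -/
/-- The number of inversions of a permutation `σ`, i.e. the number of pairs `i < j`
with `σ i > σ j`. -/
def invCount {n : ℕ} (σ : Equiv.Perm (Fin n)) : ℕ :=
  (Finset.univ.filter fun p : Fin n × Fin n => p.1 < p.2 ∧ σ p.2 < σ p.1).card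

/-- The permutation of `Fin (n+1)` sending `k` to `Fin.last n` and `k.succAbove i` to
`(e i).castSucc`. -/
def permOfMax {n : ℕ} (k : Fin (n + 1)) (e : Equiv.Perm (Fin n)) : Equiv.Perm (Fin (n + 1)) :=
  (finSuccEquiv' k).trans ((Equiv.optionCongr e).trans (finSuccEquiv' (Fin.last n)).symm)

lemma permOfMax_apply_self {n : ℕ} (k : Fin (n + 1)) (e : Equiv.Perm (Fin n)) :
    permOfMax k e k = Fin.last n := by
  simp [permOfMax, finSuccEquiv'_at, finSuccEquiv'_symm_none]

lemma permOfMax_apply_succAbove {n : ℕ} (k : Fin (n + 1)) (e : Equiv.Perm (Fin n)) (i : Fin n) :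
    permOfMax k e (k.succAbove i) = (e i).castSucc := by
  simp [permOfMax, finSuccEquiv'_succAbove, finSuccEquiv'_symm_some, Fin.succAbove_last]

lemma invCount_eq_sum {n : ℕ} (σ : Equiv.Perm (Fin n)) :
    invCount σ = ∑ i : Fin n, ∑ j : Fin n, if i < j ∧ σ j < σ i then 1 else 0 := by
  rw [invCount, Finset.card_filter, Fintype.sum_prod_type]

lemma lt_succAbove_iff' {n : ℕ} (k : Fin (n + 1)) (j : Fin n) :
    k < k.succAbove j ↔ (k : ℕ) ≤ (j : ℕ) := by
  rcases lt_or_ge (j.castSucc) k with h | h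
  · rw [Fin.succAbove_of_castSucc_lt _ _ h]
    simp only [Fin.lt_def, Fin.coe_castSucc] at *
    omega
  · rw [Fin.succAbove_of_le_castSucc _ _ h]
    simp only [Fin.lt_def, Fin.le_def, Fin.coe_castSucc, Fin.val_succ] at *
    omega

lemma invCount_permOfMax {n : ℕ} (k : Fin (n + 1)) (e : Equiv.Perm (Fin n)) :
    invCount (permOfMax k e) = (n - k) + invCount e := by
  rw [invCount_eq_sum]
  rw [Fin.sum_univ_succAbove
    (fun i => ∑ j : Fin (n + 1), if i < j ∧ permOfMax k e j < permOfMax k e i then 1 else 0) k]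
  rw [Fin.sum_univ_succAbove
    (fun j => if k < j ∧ permOfMax k e j < permOfMax k e k then 1 else 0) k]
  have hkk : (if k < k ∧ permOfMax k e k < permOfMax k e k then 1 else 0) = 0 := by simp
  have hA : ∑ j : Fin n,
      (if k < k.succAbove j ∧ permOfMax k e (k.succAbove j) < permOfMax k e k then 1 else 0)
      = n - k := by
    have h1 : ∀ j : Fin n,
        (if k < k.succAbove j ∧ permOfMax k e (k.succAbove j) < permOfMax k e k then 1 else 0)
        = if (k : ℕ) ≤ (j : ℕ) then 1 else 0 := by
      intro j
      rw [permOfMax_apply_self, permOfMax_apply_succAbove]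
      simp [Fin.castSucc_lt_last, lt_succAbove_iff']
    rw [Finset.sum_congr rfl fun j _ => h1 j]
    rw [Fin.sum_univ_eq_sum_range (fun j => if (k : ℕ) ≤ j then 1 else 0) n,
      ← Finset.card_filter]
    have h2 : Finset.filter (fun j => (k : ℕ) ≤ j) (Finset.range n) = Finset.Ico (k : ℕ) n := by
      ext m
      simp only [Finset.mem_filter, Finset.mem_range, Finset.mem_Ico]
      omega
    rw [h2, Nat.card_Ico]
  have hB : ∀ i : Fin n, ∑ j : Fin (n + 1),
      (if k.succAbove i < j ∧ permOfMax k e j < permOfMax k e (k.succAbove i) then 1 else 0)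
      = ∑ j : Fin n, if i < j ∧ e j < e i then 1 else 0 := by
    intro i
    rw [Fin.sum_univ_succAbove
      (fun j => if k.succAbove i < j ∧ permOfMax k e j < permOfMax k e (k.succAbove i)
        then 1 else 0) k]
    have h0 : (if k.succAbove i < k ∧ permOfMax k e k < permOfMax k e (k.succAbove i)
        then 1 else 0) = 0 := by
      rw [permOfMax_apply_self, permOfMax_apply_succAbove]
      simp [(Fin.castSucc_lt_last _).not_gt]
    rw [h0, zero_add]
    refine Finset.sum_congr rfl fun j _ => ?_
    simp only [permOfMax_apply_succAbove, Fin.succAbove_lt_succAbove_iff,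
      Fin.castSucc_lt_castSucc_iff]
  rw [hkk, zero_add, hA, Finset.sum_congr rfl fun i _ => hB i, ← invCount_eq_sum]

/-- The Mahonian identity: the generating function of inversions over `S_n` is the
`q`-factorial `∏_{i<n} (1 + q + ⋯ + q^i)`. -/
theorem mahonian (q n : ℕ) :
    ∑ σ : Equiv.Perm (Fin n), q ^ invCount σ =
      ∏ i ∈ Finset.range n, ∑ j ∈ Finset.range (i + 1), q ^ j := by
  induction n with
  | zero => simp [invCount]
  | succ n ih =>
    have hbij : Function.Bijective
        (fun p : Fin (n + 1) × Equiv.Perm (Fin n) => permOfMax p.1 p.2) := by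
      rw [Fintype.bijective_iff_injective_and_card]
      constructor
      · rintro ⟨k, e⟩ ⟨k', e'⟩ h
        simp only at h
        have hk : k = k' := by
          have := permOfMax_apply_self k e
          rw [h] at this
          exact (permOfMax k' e').injective (this.trans (permOfMax_apply_self k' e').symm)
        subst hk
        refine Prod.ext rfl (Equiv.ext fun i => ?_)
        have := permOfMax_apply_succAbove k e i
        rw [h, permOfMax_apply_succAbove] at this
        exact Fin.castSucc_injective _ this.symm
      · simp [Fintype.card_perm, Nat.factorial_succ]
    rw [← Fintype.sum_bijective _ hbij _ (fun σ => q ^ invCount σ) (fun _ => rfl)]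
    rw [Fintype.sum_prod_type]
    simp only [invCount_permOfMax, pow_add]
    rw [← Finset.sum_mul_sum]
    have h1 : ∑ k : Fin (n + 1), q ^ (n - (k : ℕ)) = ∑ j ∈ Finset.range (n + 1), q ^ j := by
      rw [Fin.sum_univ_eq_sum_range (fun j => q ^ (n - j)) (n + 1),
        ← Finset.sum_range_reflect (fun j => q ^ j) (n + 1)]
      simp
    rw [h1, ih, Finset.prod_range_succ]; ring

/-- Chevalley's computation of the order of `GL_n(F_q)` via the Bruhat decomposition:
`|GL_n(F_q)| = (q-1)^n · q^(n(n-1)/2) · Σ_{σ ∈ S_n} q^(inv σ)`. -/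
theorem card_GL_eq_sum_over_weyl_group (F : Type*) [Field F] [Fintype F] {n : ℕ}
    (hn : 1 ≤ n) :
    Nat.card (GL (Fin n) F) =
      (Fintype.card F - 1) ^ n * Fintype.card F ^ (n * (n - 1) / 2) *
        ∑ σ : Equiv.Perm (Fin n), Fintype.card F ^ invCount σ := by
  set q := Fintype.card F with hqdef
  have hq1 : 1 ≤ q := Fintype.card_pos
  have hgeom : ∀ m : ℕ, (q - 1) * ∑ j ∈ Finset.range m, q ^ j = q ^ m - 1 := by
    intro m
    induction m with
    | zero => simp
    | succ m ih =>
      have h1 : 1 ≤ q ^ m := Nat.one_le_pow _ _ hq1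
      have h2 : q ^ m ≤ q ^ (m + 1) := Nat.pow_le_pow_right hq1 (Nat.le_succ m)
      have h4 : (q - 1) * q ^ m = q ^ (m + 1) - q ^ m := by
        rw [Nat.sub_mul, one_mul, ← pow_succ']
      rw [Finset.sum_range_succ, Nat.mul_add, ih, h4]
      omega
  rw [Matrix.card_GL_field, mahonian, Fin.prod_univ_eq_prod_range (fun i => q ^ n - q ^ i) n]
  calc ∏ i ∈ Finset.range n, (q ^ n - q ^ i)
      = ∏ i ∈ Finset.range n, q ^ i * (q ^ (n - i) - 1) := by
        refine Finset.prod_congr rfl fun i hi => ?_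
        rw [Finset.mem_range] at hi
        have h : i + (n - i) = n := by omega
        rw [Nat.mul_sub, mul_one, ← pow_add, h]
    _ = (∏ i ∈ Finset.range n, q ^ i) * ∏ i ∈ Finset.range n, (q ^ (n - i) - 1) :=
        Finset.prod_mul_distrib
    _ = (∏ i ∈ Finset.range n, q ^ i) * ∏ i ∈ Finset.range n, (q ^ (i + 1) - 1) := by
        congr 1
        rw [← Finset.prod_range_reflect (fun j => q ^ (j + 1) - 1) n]
        refine Finset.prod_congr rfl fun j hj => ?_
        rw [Finset.mem_range] at hj
        have : n - 1 - j + 1 = n - j := by omega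
        rw [this]
    _ = q ^ (n * (n - 1) / 2) *
        ∏ i ∈ Finset.range n, ((q - 1) * ∑ j ∈ Finset.range (i + 1), q ^ j) := by
        congr 1
        · rw [Finset.prod_pow_eq_pow_sum, Finset.sum_range_id]
        · exact Finset.prod_congr rfl fun i _ => (hgeom (i + 1)).symm
    _ = (q - 1) ^ n * q ^ (n * (n - 1) / 2) *
        ∏ i ∈ Finset.range n, ∑ j ∈ Finset.range (i + 1), q ^ j := by
        rw [Finset.prod_mul_distrib, Finset.prod_const, Finset.card_range]; ring
end

section
/- Let k be a field with more than two elements and n ≥ 1. Let T ≤ GL_n(k) be the subgroup of invertible diagonal matrices. Then the normalizer N of T in GL_n(k) is exactly the group of invertible monomial matrices (matrices with exactly one nonzero entry in each row and each column), and the quotient group N/T is isomorphic to the symmetric group S_n. (Identification of the Weyl group of GL_n.) -/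
/-!
An invertible `g` normalizes the diagonal torus iff its nonzero entries sit at positions
`(σ j, j)` for some permutation `σ`. If row `i` of `g` had nonzero entries in columns
`j ≠ j'`, take `t = diag(1, …, a, …, 1)` with `a ∉ {0, 1}` in position `j`: then
`u = g t g⁻¹` is diagonal with `u g = g t`, and comparing the entries `(i, j)` and `(i, j')`
gives `u i i = a` and `u i i = 1`. Since rows and columns of an invertible matrix are nonzero,
every row then has exactly one nonzero entry and the row-to-column map is a bijection.
Conversely, conjugating by such a matrix permutes the diagonal entries. The map `g ↦ σ` is a
homomorphism onto `S_n` (permutation matrices) whose kernel consists of the diagonal matrices.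
-/

/-- The subgroup `T` of `GL_n(k)` consisting of invertible diagonal matrices. -/
def diagTorus (k : Type*) [Field k] (n : ℕ) : Subgroup (GL (Fin n) k) where
  carrier := {g | ∀ i j : Fin n, i ≠ j → (g : Matrix (Fin n) (Fin n) k) i j = 0}
  one_mem' := by
    intro i j hij
    show (↑(1 : GL (Fin n) k) : Matrix (Fin n) (Fin n) k) i j = 0
    rw [Units.val_one, Matrix.one_apply_ne hij]
  mul_mem' := by
    intro a b ha hb i j hij
    show (↑(a * b) : Matrix (Fin n) (Fin n) k) i j = 0
    rw [Units.val_mul, Matrix.mul_apply]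
    refine Finset.sum_eq_zero fun c _ => ?_
    by_cases hic : i = c
    · subst hic; rw [hb i j hij, mul_zero]
    · rw [ha i c hic, zero_mul]
  inv_mem' := by
    intro g hg i j hij
    have hdiag : (g : Matrix (Fin n) (Fin n) k) =
        Matrix.diagonal (fun a => (g : Matrix (Fin n) (Fin n) k) a a) := by
      ext a b
      by_cases hab : a = b
      · subst hab; simp
      · rw [Matrix.diagonal_apply_ne _ hab, hg a b hab]
    show (↑(g⁻¹) : Matrix (Fin n) (Fin n) k) i j = 0
    rw [Matrix.coe_units_inv, hdiag, Matrix.inv_diagonal, Matrix.diagonal_apply_ne _ hij]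

/-- A square matrix is monomial if it has exactly one nonzero entry in each row
and in each column. -/
def IsMonomial {k : Type*} [Field k] {n : ℕ} (A : Matrix (Fin n) (Fin n) k) : Prop :=
  (∀ i : Fin n, ∃! j : Fin n, A i j ≠ 0) ∧ (∀ j : Fin n, ∃! i : Fin n, A i j ≠ 0)

namespace Matrix

variable {ι R : Type*}

def HasPermSupport [Zero R] (A : Matrix ι ι R) (σ : Equiv.Perm ι) : Prop :=
  ∀ i j, A i j ≠ 0 ↔ i = σ j

namespace HasPermSupport

section Zero

variable [Zero R] {A : Matrix ι ι R} {σ τ : Equiv.Perm ι}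

lemma apply_self_ne_zero (h : A.HasPermSupport σ) (j : ι) : A (σ j) j ≠ 0 :=
  (h _ _).2 rfl

lemma apply_eq_zero (h : A.HasPermSupport σ) {i j : ι} (hij : i ≠ σ j) : A i j = 0 :=
  not_not.1 (mt (h i j).1 hij)

lemma unique (hσ : A.HasPermSupport σ) (hτ : A.HasPermSupport τ) : σ = τ :=
  Equiv.ext fun j => (hτ _ _).1 (hσ.apply_self_ne_zero j)

end Zero

section Semiring

variable [Fintype ι] [NonUnitalNonAssocSemiring R] {A B : Matrix ι ι R} {σ τ : Equiv.Perm ι}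

lemma mul_apply_right (hB : B.HasPermSupport τ) (A : Matrix ι ι R) (i j : ι) :
    (A * B) i j = A i (τ j) * B (τ j) j :=
  Matrix.mul_apply.trans <| Finset.sum_eq_single (τ j)
    (fun _ _ hc => by rw [hB.apply_eq_zero hc, mul_zero]) (by simp)

lemma mul_apply_left (hA : A.HasPermSupport σ) (B : Matrix ι ι R) (i j : ι) :
    (A * B) (σ i) j = A (σ i) i * B i j :=
  Matrix.mul_apply.trans <| Finset.sum_eq_single i
    (fun _ _ hc => by rw [hA.apply_eq_zero (σ.injective.ne hc).symm, zero_mul]) (by simp)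

variable [NoZeroDivisors R]

lemma mul (hA : A.HasPermSupport σ) (hB : B.HasPermSupport τ) :
    (A * B).HasPermSupport (σ * τ) := fun i j => by
  rw [hB.mul_apply_right, mul_ne_zero_iff, and_iff_left (hB.apply_self_ne_zero j), hA,
    Equiv.Perm.mul_apply]

lemma isDiag_iff_of_mul_eq_mul (hA : A.HasPermSupport σ) {u : Matrix ι ι R}
    (h : u * A = A * B) : u.IsDiag ↔ B.IsDiag := by
  have key (p q : ι) : u (σ p) (σ q) = 0 ↔ B p q = 0 := by
    have hpq := congr_fun₂ h (σ p) q
    rw [hA.mul_apply_right, hA.mul_apply_left] at hpq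
    rw [← mul_eq_zero_iff_right (hA.apply_self_ne_zero q), hpq,
      mul_eq_zero_iff_left (hA.apply_self_ne_zero p)]
  refine ⟨fun hu p q hpq => (key p q).1 (hu (σ.injective.ne hpq)), fun hB i j hij => ?_⟩
  simpa using (key (σ⁻¹ i) (σ⁻¹ j)).2 (hB (σ⁻¹.injective.ne hij))

end Semiring

end HasPermSupport

lemma hasPermSupport_one_iff [Zero R] {A : Matrix ι ι R} :
    A.HasPermSupport 1 ↔ A.IsDiag ∧ ∀ i, A i i ≠ 0 := by
  refine ⟨fun h => ⟨fun i j hij => HasPermSupport.apply_eq_zero h hij,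
    fun i => HasPermSupport.apply_self_ne_zero h i⟩, fun ⟨hd, hii⟩ i j => ?_⟩
  by_cases hij : i = j
  · simpa [hij] using hii j
  · simpa [hij] using hd hij

lemma hasPermSupport_permMatrix [DecidableEq ι] [Zero R] [One R] [NeZero (1 : R)]
    (σ : Equiv.Perm ι) : (σ⁻¹.permMatrix R).HasPermSupport σ := fun i j => by
  simp [PEquiv.toMatrix_apply, Equiv.eq_symm_apply, eq_comm]

lemma exists_hasPermSupport [Finite ι] [Zero R] {A : Matrix ι ι R}
    (hrow : ∀ i, ∃! j, A i j ≠ 0) (hcol : ∀ j, ∃ i, A i j ≠ 0) :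
    ∃ σ : Equiv.Perm ι, A.HasPermSupport σ := by
  choose f hf hf_unique using hrow
  have hsurj : f.Surjective := fun j =>
    let ⟨i, hi⟩ := hcol j
    ⟨i, (hf_unique i j hi).symm⟩
  refine ⟨(Equiv.ofBijective f ⟨Finite.injective_iff_surjective.2 hsurj, hsurj⟩).symm,
    fun i j => ?_⟩
  rw [Equiv.eq_symm_apply]
  exact ⟨fun h => (hf_unique i j h).symm, fun h => h ▸ hf i⟩

section IsUnitDet

variable [Fintype ι] [DecidableEq ι] [CommRing R] [Nontrivial R] {A : Matrix ι ι R}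

lemma exists_apply_ne_zero_of_isUnit_det (hA : IsUnit A.det) (i : ι) : ∃ j, A i j ≠ 0 := by
  by_contra! h
  exact not_isUnit_zero (det_eq_zero_of_row_eq_zero i h ▸ hA)

lemma exists_apply_ne_zero_of_isUnit_det' (hA : IsUnit A.det) (j : ι) : ∃ i, A i j ≠ 0 := by
  by_contra! h
  exact not_isUnit_zero (det_eq_zero_of_column_eq_zero j h ▸ hA)

lemma hasPermSupport_one_iff_isDiag (hA : IsUnit A.det) : A.HasPermSupport 1 ↔ A.IsDiag := by
  refine hasPermSupport_one_iff.trans ⟨And.left, fun hd => ⟨hd, fun i => ?_⟩⟩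
  obtain ⟨j, hj⟩ := exists_apply_ne_zero_of_isUnit_det hA i
  obtain rfl : i = j := by_contra fun hij => hj (hd hij)
  exact hj

end IsUnitDet

lemma IsDiag.apply_eq_of_mul_eq_mul_diagonal [Fintype ι] [DecidableEq ι] [CommRing R]
    [NoZeroDivisors R] {u A : Matrix ι ι R} {d : ι → R} (hu : u.IsDiag)
    (h : u * A = A * diagonal d) {i j : ι} (hA : A i j ≠ 0) : u i i = d j := by
  have hij := congr_fun₂ h i j
  rw [← hu.diagonal_diag, diagonal_mul, mul_diagonal, mul_comm] at hij
  exact mul_left_cancel₀ hA hij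

end Matrix

open Matrix

lemma isMonomial_iff_exists_hasPermSupport {k : Type*} [Field k] {n : ℕ}
    {A : Matrix (Fin n) (Fin n) k} : IsMonomial A ↔ ∃ σ, A.HasPermSupport σ := by
  refine ⟨fun ⟨hrow, hcol⟩ => exists_hasPermSupport hrow fun j => (hcol j).exists,
    fun ⟨σ, h⟩ => ⟨fun i => ⟨σ⁻¹ i, ?_, fun j hj => ?_⟩,
      fun j => ⟨σ j, h.apply_self_ne_zero j, fun i hi => (h i j).1 hi⟩⟩⟩
  · simpa using h.apply_self_ne_zero (σ⁻¹ i)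
  · simp [(h i j).1 hj]

namespace diagTorus

variable {k : Type*} [Field k] {n : ℕ}

lemma mem_iff_isDiag {t : GL (Fin n) k} :
    t ∈ diagTorus k n ↔ (t : Matrix (Fin n) (Fin n) k).IsDiag :=
  Iff.rfl

lemma coe_conj_mul (g t : GL (Fin n) k) :
    ((g * t * g⁻¹ : GL (Fin n) k) : Matrix (Fin n) (Fin n) k) * g = g * t := by
  rw [← Units.val_mul, inv_mul_cancel_right, Units.val_mul]

lemma mem_normalizer_of_hasPermSupport {g : GL (Fin n) k} {σ : Equiv.Perm (Fin n)}
    (hg : (g : Matrix (Fin n) (Fin n) k).HasPermSupport σ) :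
    g ∈ Subgroup.normalizer (diagTorus k n : Set (GL (Fin n) k)) :=
  Subgroup.mem_normalizer_iff.2 fun t =>
    (hg.isDiag_iff_of_mul_eq_mul (coe_conj_mul g t)).symm

lemma eq_of_apply_ne_zero_of_mem_normalizer (hk : ∃ a : k, a ≠ 0 ∧ a ≠ 1)
    {g : GL (Fin n) k} (hg : g ∈ Subgroup.normalizer (diagTorus k n : Set (GL (Fin n) k)))
    {i j j' : Fin n} (hj : (g : Matrix (Fin n) (Fin n) k) i j ≠ 0)
    (hj' : (g : Matrix (Fin n) (Fin n) k) i j' ≠ 0) : j = j' := by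
  obtain ⟨a, ha0, ha1⟩ := hk
  by_contra hne
  let t : GL (Fin n) k := .mkOfDetNeZero (diagonal (Pi.mulSingle j a)) (by
    simp [Pi.mulSingle_apply, ha0])
  have hu : ((g * t * g⁻¹ : GL (Fin n) k) : Matrix (Fin n) (Fin n) k).IsDiag :=
    (Subgroup.mem_normalizer_iff.1 hg t).1 (isDiag_diagonal _)
  have ha := hu.apply_eq_of_mul_eq_mul_diagonal (coe_conj_mul g t) hj
  have h1 := hu.apply_eq_of_mul_eq_mul_diagonal (coe_conj_mul g t) hj'
  rw [Pi.mulSingle_eq_same] at ha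
  rw [Pi.mulSingle_eq_of_ne (Ne.symm hne)] at h1
  exact ha1 (ha.symm.trans h1)

lemma exists_hasPermSupport_of_mem_normalizer (hk : ∃ a : k, a ≠ 0 ∧ a ≠ 1)
    {g : GL (Fin n) k} (hg : g ∈ Subgroup.normalizer (diagTorus k n : Set (GL (Fin n) k))) :
    ∃ σ, (g : Matrix (Fin n) (Fin n) k).HasPermSupport σ := by
  have hdet := isUnits_det_units g
  refine exists_hasPermSupport (fun i => ?_) (exists_apply_ne_zero_of_isUnit_det' hdet)
  obtain ⟨j, hj⟩ := exists_apply_ne_zero_of_isUnit_det hdet i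
  exact ⟨j, hj, fun j' hj' => eq_of_apply_ne_zero_of_mem_normalizer hk hg hj' hj⟩

lemma mem_normalizer_iff_isMonomial (hk : ∃ a : k, a ≠ 0 ∧ a ≠ 1) {g : GL (Fin n) k} :
    g ∈ Subgroup.normalizer (diagTorus k n : Set (GL (Fin n) k)) ↔
      IsMonomial (g : Matrix (Fin n) (Fin n) k) := by
  rw [isMonomial_iff_exists_hasPermSupport]
  exact ⟨exists_hasPermSupport_of_mem_normalizer hk,
    fun ⟨_, hσ⟩ => mem_normalizer_of_hasPermSupport hσ⟩

noncomputable def weylHom (hk : ∃ a : k, a ≠ 0 ∧ a ≠ 1) :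
    Subgroup.normalizer (diagTorus k n : Set (GL (Fin n) k)) →* Equiv.Perm (Fin n) where
  toFun g := (exists_hasPermSupport_of_mem_normalizer hk g.2).choose
  map_one' := (exists_hasPermSupport_of_mem_normalizer hk (one_mem _)).choose_spec.unique
    (hasPermSupport_one_iff.2 ⟨isDiag_one, fun _ => by simp⟩)
  map_mul' g h := (exists_hasPermSupport_of_mem_normalizer hk (mul_mem g.2 h.2)).choose_spec.unique
    ((exists_hasPermSupport_of_mem_normalizer hk g.2).choose_spec.mul
      (exists_hasPermSupport_of_mem_normalizer hk h.2).choose_spec)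

lemma weylHom_eq_iff (hk : ∃ a : k, a ≠ 0 ∧ a ≠ 1)
    (g : Subgroup.normalizer (diagTorus k n : Set (GL (Fin n) k))) (σ : Equiv.Perm (Fin n)) :
    weylHom hk g = σ ↔ ((g : GL (Fin n) k) : Matrix (Fin n) (Fin n) k).HasPermSupport σ := by
  have hg : ((g : GL (Fin n) k) : Matrix (Fin n) (Fin n) k).HasPermSupport (weylHom hk g) :=
    (exists_hasPermSupport_of_mem_normalizer hk g.2).choose_spec
  exact ⟨fun h => h ▸ hg, hg.unique⟩

lemma ker_weylHom (hk : ∃ a : k, a ≠ 0 ∧ a ≠ 1) :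
    (weylHom hk).ker =
      (diagTorus k n).subgroupOf (Subgroup.normalizer (diagTorus k n : Set (GL (Fin n) k))) := by
  ext g
  rw [MonoidHom.mem_ker, Subgroup.mem_subgroupOf, weylHom_eq_iff,
    hasPermSupport_one_iff_isDiag (isUnits_det_units _), mem_iff_isDiag]

lemma weylHom_surjective (hk : ∃ a : k, a ≠ 0 ∧ a ≠ 1) :
    Function.Surjective (weylHom (k := k) (n := n) hk) :=
  fun σ =>
    let P : GL (Fin n) k := .mkOfDetNeZero (σ⁻¹.permMatrix k) (by
      rw [det_permutation]
      exact ((Equiv.Perm.sign _).isUnit.map (Int.castRingHom k)).ne_zero)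
    ⟨⟨P, mem_normalizer_of_hasPermSupport (hasPermSupport_permMatrix σ)⟩,
      (weylHom_eq_iff hk _ σ).2 (hasPermSupport_permMatrix σ)⟩

end diagTorus

theorem weyl_group_of_GL_general {k : Type*} [Field k] {n : ℕ}
    (hk : ∃ a : k, a ≠ 0 ∧ a ≠ 1) :
    (∀ g : GL (Fin n) k,
      g ∈ Subgroup.normalizer (diagTorus k n : Set (GL (Fin n) k)) ↔ IsMonomial (g : Matrix (Fin n) (Fin n) k)) ∧
    Nonempty
      (Subgroup.normalizer (diagTorus k n : Set (GL (Fin n) k)) ⧸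
          (diagTorus k n).subgroupOf (Subgroup.normalizer (diagTorus k n : Set (GL (Fin n) k))) ≃*
        Equiv.Perm (Fin n)) :=
  ⟨fun _ => diagTorus.mem_normalizer_iff_isMonomial hk,
    ⟨(QuotientGroup.quotientMulEquivOfEq (diagTorus.ker_weylHom hk).symm).trans
      (QuotientGroup.quotientKerEquivOfSurjective _ (diagTorus.weylHom_surjective hk))⟩⟩

/-- Identification of the Weyl group of `GL_n`: if `|k| > 2` then the normalizer `N` of
the diagonal torus `T ≤ GL_n(k)` consists exactly of the invertible monomial matrices,
and `N/T` is isomorphic to the symmetric group `S_n`. -/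
theorem weyl_group_of_GL {k : Type*} [Field k] {n : ℕ} (hn : 1 ≤ n)
    (hk : ∃ a : k, a ≠ 0 ∧ a ≠ 1) :
    (∀ g : GL (Fin n) k,
      g ∈ Subgroup.normalizer (diagTorus k n : Set (GL (Fin n) k)) ↔ IsMonomial (g : Matrix (Fin n) (Fin n) k)) ∧
    Nonempty
      (Subgroup.normalizer (diagTorus k n : Set (GL (Fin n) k)) ⧸
          (diagTorus k n).subgroupOf (Subgroup.normalizer (diagTorus k n : Set (GL (Fin n) k))) ≃*
        Equiv.Perm (Fin n)) :=
  weyl_group_of_GL_general hk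
end
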